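/- arXiv:2205.06872 — 5 statements merged into one kernel-verified Lean document; each statement's English description precedes it below -/
import Mathlib

section
/- Let x̄ and x̂ be two minimizers of the LASSO objective x ↦ (1/2)‖Ax − b‖² + λ‖x‖₁ for fixed A ∈ ℝ^{m×n}, b ∈ ℝ^m, λ > 0. Then A x̄ = A x̂ and ‖x̄‖₁ = ‖x̂‖₁; that is, the residual b − Ax̄ and the ℓ1-norm value are the same across all minimizers. -/
open Finset

/-- The ℓ1-norm on ℝⁿ. -/
def l1 {n : ℕ} (x : Fin n → ℝ) : ℝ := ∑ i, |x i|

/-!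
The objective is convex, and its quadratic part is strictly convex in `Ax`: at the midpoint `z` of
two minimizers it lies below the average of their values by `‖Ax̄ - Ax̂‖² / 8`. Since both minimizers
attain the minimal value, which `z` cannot undercut, `Ax̄ = Ax̂`; the quadratic parts then agree,
and so do the ℓ1 parts, because `λ ≠ 0`.
-/

open Matrix

theorem mulVec_midpoint {m n : Type*} [Fintype n] (A : Matrix m n ℝ) (x y : n → ℝ) :
    A *ᵥ (fun i => (x i + y i) / 2) = fun j => ((A *ᵥ x) j + (A *ᵥ y) j) / 2 := by
  have hmid : (fun i => (x i + y i) / 2) = (2⁻¹ : ℝ) • (x + y) := by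
    funext i
    simp [div_eq_inv_mul]
  rw [hmid, mulVec_smul, mulVec_add]
  funext j
  simp [div_eq_inv_mul]

theorem sum_sq_midpoint_sub {ι : Type*} [Fintype ι] (u v b : ι → ℝ) :
    ∑ j, ((u j + v j) / 2 - b j) ^ 2 =
      (∑ j, (u j - b j) ^ 2 + ∑ j, (v j - b j) ^ 2) / 2 - (∑ j, (u j - v j) ^ 2) / 4 := by
  rw [← sum_add_distrib, sum_div, sum_div, ← sum_sub_distrib]
  exact sum_congr rfl fun j _ => by ring

theorem l1_midpoint_le {n : ℕ} (x y : Fin n → ℝ) :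
    l1 (fun i => (x i + y i) / 2) ≤ (l1 x + l1 y) / 2 := by
  rw [l1, l1, l1, ← sum_add_distrib, sum_div]
  gcongr with i
  rw [abs_div, abs_two]
  gcongr
  exact abs_add_le _ _

noncomputable def lassoObjective {m n : ℕ} (A : Matrix (Fin m) (Fin n) ℝ) (b : Fin m → ℝ)
    (lam : ℝ) (x : Fin n → ℝ) : ℝ :=
  (1/2) * (∑ j, ((A *ᵥ x) j - b j) ^ 2) + lam * l1 x

section Lasso

variable {m n : ℕ} (A : Matrix (Fin m) (Fin n) ℝ) (b : Fin m → ℝ) {lam : ℝ}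

theorem lassoObjective_midpoint_le (hlam : 0 ≤ lam) (x y : Fin n → ℝ) :
    lassoObjective A b lam (fun i => (x i + y i) / 2) ≤
      (lassoObjective A b lam x + lassoObjective A b lam y) / 2 -
        (∑ j, ((A *ᵥ x) j - (A *ᵥ y) j) ^ 2) / 8 := by
  have hl1 := mul_le_mul_of_nonneg_left (l1_midpoint_le x y) hlam
  rw [lassoObjective, mulVec_midpoint, sum_sq_midpoint_sub]
  unfold lassoObjective
  linarith

theorem mulVec_eq_of_lassoObjective_isMin (hlam : 0 ≤ lam) {x y : Fin n → ℝ}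
    (hx : ∀ z, lassoObjective A b lam x ≤ lassoObjective A b lam z)
    (hxy : lassoObjective A b lam x = lassoObjective A b lam y) :
    A *ᵥ x = A *ᵥ y := by
  have hsq_nonneg : 0 ≤ fun j => ((A *ᵥ x) j - (A *ᵥ y) j) ^ 2 := fun j => sq_nonneg _
  have hsum : ∑ j, ((A *ᵥ x) j - (A *ᵥ y) j) ^ 2 = 0 := by
    have hmid := lassoObjective_midpoint_le A b hlam x y
    have hmin := hx fun i => (x i + y i) / 2
    linarith [sum_nonneg fun j (_ : j ∈ univ) => hsq_nonneg j]
  funext j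
  have hj := congr_fun ((Fintype.sum_eq_zero_iff_of_nonneg hsq_nonneg).1 hsum) j
  exact sub_eq_zero.1 (pow_eq_zero_iff two_ne_zero |>.1 hj)

end Lasso

/-- All LASSO minimizers share the same residual and the same ℓ1-norm value. -/
theorem lasso_residual_and_l1_constant {m n : ℕ} (A : Matrix (Fin m) (Fin n) ℝ)
    (b : Fin m → ℝ) (lam : ℝ) (hlam : 0 < lam) (xbar xhat : Fin n → ℝ)
    (hxbar : ∀ x : Fin n → ℝ,
      (1/2) * (∑ j, (A.mulVec xbar j - b j)^2) + lam * l1 xbar ≤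
      (1/2) * (∑ j, (A.mulVec x j - b j)^2) + lam * l1 x)
    (hxhat : ∀ x : Fin n → ℝ,
      (1/2) * (∑ j, (A.mulVec xhat j - b j)^2) + lam * l1 xhat ≤
      (1/2) * (∑ j, (A.mulVec x j - b j)^2) + lam * l1 x) :
    A.mulVec xbar = A.mulVec xhat ∧ l1 xbar = l1 xhat := by
  have hval : lassoObjective A b lam xbar = lassoObjective A b lam xhat :=
    le_antisymm (hxbar xhat) (hxhat xbar)
  have hA := mulVec_eq_of_lassoObjective_isMin A b hlam.le hxbar hval
  refine ⟨hA, mul_left_cancel₀ hlam.ne' ?_⟩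
  rw [lassoObjective, lassoObjective, hA] at hval
  linarith
end

section
/- Let A ∈ ℝ^{m×n} have columns of unit Euclidean norm, let μ(A) = max_{i≠j} |⟨A_i, A_j⟩| be its coherence, and suppose x₀ ∈ ℝⁿ satisfies ‖x₀‖₀ < (1/2)(1 + 1/μ(A)) with I₀ = supp(x₀) and A_{I₀} of full column rank. Define b̄ = A x₀ and s₀ = (x₀)_{I₀}. Then there exists λ_max ∈ (0, +∞] such that for every λ ∈ [0, λ_max), the vector x̄ with x̄_{I₀} = s₀ − λ (A_{I₀}^T A_{I₀})^{-1} sgn(s₀) and x̄_{I₀^C} = 0 satisfies sgn(x̄_{I₀}) = sgn(s₀) and is a minimizer of x ↦ (1/2)‖Ax − b̄‖² + λ‖x‖₁. -/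
open Finset Matrix

/-!
For small `λ ≥ 0` the vector `x̄ = x₀ - λ w` keeps the sign pattern of `x₀`, because `w` vanishes
off the support `I₀` of `x₀`. The vector `g = AᵀA w` is then a dual certificate for `x̄`: it
satisfies `Aᵀ(A x₀ - A x̄) = λ g`, equals `sgn x₀` on `I₀` since `A_{I₀}ᵀA_{I₀} w_{I₀} = sgn s₀`,
and is bounded by `1` off `I₀` by the coherence estimate behind Fuchs's condition
`μ (2‖x₀‖₀ - 1) < 1`. Hence `g` is a subgradient of `‖·‖₁` at `x̄` satisfying the optimality
condition of the convex LASSO objective.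
-/

open Filter Topology

namespace Real

lemma sign_mul_self_eq_abs (r : ℝ) : sign r * r = |r| := by
  rcases lt_trichotomy r 0 with h | rfl | h
  · rw [sign_of_neg h, abs_of_neg h, neg_one_mul]
  · simp
  · rw [sign_of_pos h, abs_of_pos h, one_mul]

lemma abs_sign_le_one (r : ℝ) : |sign r| ≤ 1 := by
  rcases sign_apply_eq r with h | h | h <;> simp [h]

lemma eventually_sign_eq {x : ℝ} (hx : x ≠ 0) : ∀ᶠ y in 𝓝 x, sign y = sign x := by
  rcases hx.lt_or_gt with hx | hx
  · filter_upwards [gt_mem_nhds hx] with y hy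
    rw [sign_of_neg hy, sign_of_neg hx]
  · filter_upwards [lt_mem_nhds hx] with y hy
    rw [sign_of_pos hy, sign_of_pos hx]

end Real

lemma eventually_sign_sub_mul_eq {ι : Type*} [Finite ι] (x w : ι → ℝ)
    (hw : ∀ i, x i = 0 → w i = 0) :
    ∀ᶠ t in 𝓝 (0 : ℝ), ∀ i, Real.sign (x i - t * w i) = Real.sign (x i) := by
  refine eventually_all.2 fun i => ?_
  by_cases hx : x i = 0
  · simp [hx, hw i hx]
  · have hcont : Continuous fun t : ℝ => x i - t * w i := by fun_prop
    have hlim : Tendsto (fun t => x i - t * w i) (𝓝 0) (𝓝 (x i)) := by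
      simpa using hcont.tendsto 0
    exact hlim.eventually (Real.eventually_sign_eq hx)

lemma exists_pos_forall_ofReal_lt_of_eventually_nhdsGE {P : ℝ → Prop} (h : ∀ᶠ t in 𝓝[≥] 0, P t) :
    ∃ lmax : ENNReal, 0 < lmax ∧ ∀ t, 0 ≤ t → ENNReal.ofReal t < lmax → P t := by
  obtain ⟨u, hu, hsub⟩ := mem_nhdsGE_iff_exists_Ico_subset.1 h
  exact ⟨ENNReal.ofReal u, ENNReal.ofReal_pos.2 hu,
    fun t ht htu => hsub ⟨ht, (ENNReal.ofReal_lt_ofReal_iff hu).1 htu⟩⟩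

lemma abs_sum_mul_le_card_mul_norm {ι : Type*} [Fintype ι] (s : Finset ι) {a c : ι → ℝ} {μ : ℝ}
    (ha : ∀ l ∈ s, |a l| ≤ μ) : |∑ l ∈ s, a l * c l| ≤ (#s : ℝ) * μ * ‖c‖ := by
  calc |∑ l ∈ s, a l * c l| ≤ ∑ l ∈ s, |a l| * |c l| := by
        simpa only [abs_mul] using abs_sum_le_sum_abs (fun l => a l * c l) s
    _ ≤ ∑ _l ∈ s, μ * ‖c‖ := sum_le_sum fun l hl => mul_le_mul (ha l hl)
        (norm_le_pi_norm c l : |c l| ≤ ‖c‖) (abs_nonneg _) ((abs_nonneg _).trans (ha l hl))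
    _ = #s * μ * ‖c‖ := by rw [sum_const, nsmul_eq_mul, mul_assoc]

lemma one_sub_mul_norm_le_norm_mulVec {ι : Type*} [Fintype ι] [DecidableEq ι]
    {G : Matrix ι ι ℝ} {μ : ℝ} (hdiag : ∀ i, G i i = 1) (hoff : ∀ i j, i ≠ j → |G i j| ≤ μ)
    (c : ι → ℝ) : (1 - μ * (Fintype.card ι - 1)) * ‖c‖ ≤ ‖G *ᵥ c‖ := by
  cases isEmpty_or_nonempty ι
  · simp [Subsingleton.elim c 0]
  suffices ‖c‖ ≤ ‖G *ᵥ c‖ + (Fintype.card ι - 1) * μ * ‖c‖ by linarith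
  refine (pi_norm_le_iff_of_nonempty c).2 fun j => ?_
  have hrow : (G *ᵥ c) j = c j + ∑ l ∈ univ.erase j, G j l * c l := by
    rw [mulVec, dotProduct, ← add_sum_erase _ _ (mem_univ j), hdiag, one_mul]
  have hcard : ((#(univ.erase j) : ℕ) : ℝ) = Fintype.card ι - 1 := by
    rw [card_erase_of_mem (mem_univ j), card_univ, Nat.cast_pred Fintype.card_pos]
  have hoff_row := abs_sum_mul_le_card_mul_norm (univ.erase j) (c := c)
    fun l hl => hoff j l (ne_of_mem_erase hl).symm
  rw [hcard] at hoff_row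
  calc ‖c j‖ = ‖(G *ᵥ c) j - ∑ l ∈ univ.erase j, G j l * c l‖ := by
        rw [hrow, add_sub_cancel_right]
    _ ≤ ‖(G *ᵥ c) j‖ + |∑ l ∈ univ.erase j, G j l * c l| := norm_sub_le _ _
    _ ≤ ‖G *ᵥ c‖ + (Fintype.card ι - 1) * μ * ‖c‖ := add_le_add (norm_le_pi_norm _ j) hoff_row

lemma dotProduct_le_l1 {n : ℕ} {g : Fin n → ℝ} (hg : ∀ i, |g i| ≤ 1) (x : Fin n → ℝ) :
    g ⬝ᵥ x ≤ l1 x :=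
  sum_le_sum fun i _ => (le_abs_self _).trans <| by
    rw [abs_mul]; exact mul_le_of_le_one_left (abs_nonneg _) (hg i)

lemma dotProduct_eq_l1_of_sign {n : ℕ} {g x : Fin n → ℝ}
    (h : ∀ i, x i ≠ 0 → g i = Real.sign (x i)) : g ⬝ᵥ x = l1 x := by
  refine sum_congr rfl fun i _ => ?_
  by_cases hx : x i = 0
  · simp [hx]
  · rw [h i hx, Real.sign_mul_self_eq_abs]

-- `hg` and `hgx` say that `g ∈ ∂‖·‖₁ (xbar)`; `hopt` is the stationarity condition.
theorem lasso_objective_le_of_subgradient {m n : ℕ} (A : Matrix (Fin m) (Fin n) ℝ)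
    (b : Fin m → ℝ) (xbar g : Fin n → ℝ) {lam : ℝ} (hlam : 0 ≤ lam) (hg : ∀ i, |g i| ≤ 1)
    (hgx : g ⬝ᵥ xbar = l1 xbar) (hopt : (A *ᵥ xbar - b) ᵥ* A = -lam • g) (x : Fin n → ℝ) :
    (1/2) * ∑ j, ((A *ᵥ xbar) j - b j)^2 + lam * l1 xbar ≤
      (1/2) * ∑ j, ((A *ᵥ x) j - b j)^2 + lam * l1 x := by
  set r := A *ᵥ xbar - b
  set d := x - xbar
  have hsq : ∑ j, ((A *ᵥ x) j - b j)^2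
      = ∑ j, r j ^ 2 + 2 * (r ⬝ᵥ (A *ᵥ d)) + ∑ j, (A *ᵥ d) j ^ 2 := by
    have hres : ∀ j, (A *ᵥ x) j - b j = r j + (A *ᵥ d) j := fun j => by
      simp only [r, d, mulVec_sub, Pi.sub_apply]; ring
    simp only [hres, add_sq, sum_add_distrib, dotProduct, mul_sum, mul_assoc]
  have hcross : r ⬝ᵥ (A *ᵥ d) = -lam * (g ⬝ᵥ x - l1 xbar) := by
    rw [dotProduct_mulVec, hopt, smul_dotProduct, dotProduct_sub, hgx, smul_eq_mul]
  have hgx_le := dotProduct_le_l1 hg x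
  have hquad : 0 ≤ ∑ j, (A *ᵥ d) j ^ 2 := by positivity
  have hres_bar : ∑ j, ((A *ᵥ xbar) j - b j)^2 = ∑ j, r j ^ 2 := rfl
  rw [hsq, hcross, hres_bar]
  nlinarith [mul_le_mul_of_nonneg_left hgx_le hlam]

lemma mulVec_apply_eq_sum_subtype {ι κ : Type*} [Fintype κ] (M : Matrix ι κ ℝ) {p : κ → Prop}
    [DecidablePred p] {w : κ → ℝ} (hw : ∀ l, ¬ p l → w l = 0) (i : ι) :
    (M *ᵥ w) i = ∑ l : {l // p l}, M i l * w l := by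
  rw [mulVec, dotProduct, ← Fintype.sum_subtype_add_sum_subtype p, add_eq_left]
  exact sum_eq_zero fun l _ => by rw [hw l l.2, mul_zero]

-- Diagonal dominance gives `‖w‖∞ ≤ 1 / (1 - μ (K - 1))` on the support, and each entry off it is
-- then at most `K μ / (1 - μ (K - 1)) ≤ 1`.
lemma abs_mulVec_le_one_of_coherent {ι : Type*} [Fintype ι] [DecidableEq ι]
    {M : Matrix ι ι ℝ} {μ : ℝ} (hdiag : ∀ i, M i i = 1) (hoff : ∀ i j, i ≠ j → |M i j| ≤ μ)
    {p : ι → Prop} [DecidablePred p] (hsparse : μ * (2 * Fintype.card {i // p i} - 1) ≤ 1)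
    {w : ι → ℝ} (hw : ∀ i, ¬ p i → w i = 0) (hsupp : ∀ i, p i → |(M *ᵥ w) i| ≤ 1) (i : ι) :
    |(M *ᵥ w) i| ≤ 1 := by
  by_cases hi : p i
  · exact hsupp i hi
  set c : {i // p i} → ℝ := fun l => w l
  have hc : (1 - μ * (Fintype.card {i // p i} - 1)) * ‖c‖ ≤ 1 := by
    refine (one_sub_mul_norm_le_norm_mulVec (G := M.submatrix Subtype.val Subtype.val)
      (fun j => hdiag j.1) (fun j l hjl => hoff j l (Subtype.val_injective.ne hjl)) c).trans ?_
    refine (pi_norm_le_iff_of_nonneg zero_le_one).2 fun j => ?_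
    rw [Real.norm_eq_abs]
    convert hsupp j j.2 using 2
    exact (mulVec_apply_eq_sum_subtype M hw j).symm
  have hrow := abs_sum_mul_le_card_mul_norm univ (c := c) (a := fun l : {j // p j} => M i l)
    fun l _ => hoff i l fun h => hi (h ▸ l.2)
  rw [card_univ] at hrow
  rw [mulVec_apply_eq_sum_subtype M hw]
  nlinarith [norm_nonneg c]

lemma mul_two_mul_sub_one_lt_one {μ K : ℝ} (hμ : 0 < μ) (hK : K < 1 / 2 * (1 + 1 / μ)) :
    μ * (2 * K - 1) < 1 := by
  have := mul_lt_mul_of_pos_left hK hμ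
  field_simp at this ⊢
  linarith

/-- Fuchs-type result: if `b̄ = A x₀` is a sufficiently sparse representation (relative
to the coherence of `A`, whose columns have unit norm), with `A_{I₀}` of full column rank,
then for all small enough `λ ≥ 0` (up to some `λ_max ∈ (0, +∞]`) the explicitly defined
vector `x̄(λ)`, supported on `I₀`, with `x̄(λ)_{I₀} = s₀ − λ (A_{I₀}ᵀA_{I₀})⁻¹ sgn(s₀)`,
keeps the sign pattern of `x₀` and minimizes the LASSO objective. -/
theorem fuchs_lasso_solution_path {m n : ℕ} (A : Matrix (Fin m) (Fin n) ℝ)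
    (x₀ : Fin n → ℝ) (μ : ℝ) (hμ : 0 < μ)
    (hunit : ∀ i, ∑ j, (A j i)^2 = 1)
    (hcoh : ∀ i j, i ≠ j → |∑ k, A k i * A k j| ≤ μ)
    (hsparse : ((Finset.univ.filter (fun i => x₀ i ≠ 0)).card : ℝ) < (1/2) * (1 + 1/μ))
    (G : Matrix {i // x₀ i ≠ 0} {i // x₀ i ≠ 0} ℝ)
    (hG : ∀ i j, G i j = ∑ k, A k i.1 * A k j.1)
    (hrank : IsUnit G.det)
    (w : Fin n → ℝ)
    (hw : ∀ i, w i = if h : x₀ i ≠ 0 then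
      Matrix.mulVec G⁻¹ (fun j => Real.sign (x₀ j.1)) ⟨i, h⟩ else 0) :
    ∃ lmax : ENNReal, 0 < lmax ∧ ∀ lam : ℝ, 0 ≤ lam → ENNReal.ofReal lam < lmax →
      (∀ i, Real.sign (x₀ i - lam * w i) = Real.sign (x₀ i)) ∧
      (∀ x : Fin n → ℝ,
        (1/2) * (∑ j, (A.mulVec (x₀ - lam • w) j - A.mulVec x₀ j)^2)
          + lam * l1 (x₀ - lam • w) ≤
        (1/2) * (∑ j, (A.mulVec x j - A.mulVec x₀ j)^2) + lam * l1 x) := by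
  classical
  set M := Aᵀ * A
  set c := G⁻¹ *ᵥ fun j => Real.sign (x₀ j.1) with hc
  have hw_off : ∀ i, ¬ x₀ i ≠ 0 → w i = 0 := fun i h => by rw [hw, dif_neg h]
  have hM_supp : ∀ i (hi : x₀ i ≠ 0), (M *ᵥ w) i = Real.sign (x₀ i) := fun i hi => by
    have hGc : G *ᵥ c = fun j => Real.sign (x₀ j.1) := by
      rw [hc, mulVec_mulVec, mul_nonsing_inv _ hrank, one_mulVec]
    rw [mulVec_apply_eq_sum_subtype M hw_off, ← congrFun hGc ⟨i, hi⟩]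
    exact sum_congr rfl fun l _ => by simp [M, mul_apply, hG, hw, l.2]
  have hfuchs : μ * (2 * Fintype.card {i // x₀ i ≠ 0} - 1) ≤ 1 := by
    rw [Fintype.card_subtype]
    exact (mul_two_mul_sub_one_lt_one hμ hsparse).le
  have hM_le_one : ∀ i, |(M *ᵥ w) i| ≤ 1 :=
    abs_mulVec_le_one_of_coherent (M := M) (fun j => by simpa [M, mul_apply, sq] using hunit j)
      hcoh hfuchs hw_off fun i hi => by rw [hM_supp i hi]; exact Real.abs_sign_le_one _
  obtain ⟨lmax, hpos, hsign⟩ := exists_pos_forall_ofReal_lt_of_eventually_nhdsGE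
    ((eventually_sign_sub_mul_eq x₀ w fun i => hw_off i ∘ not_not.2).filter_mono
      nhdsWithin_le_nhds)
  refine ⟨lmax, hpos, fun lam hlam hlt => ⟨hsign lam hlam hlt,
    lasso_objective_le_of_subgradient A _ _ (M *ᵥ w) hlam hM_le_one ?_ ?_⟩⟩
  · refine dotProduct_eq_l1_of_sign fun i hi => ?_
    have hsign_i : Real.sign ((x₀ - lam • w) i) = Real.sign (x₀ i) := hsign lam hlam hlt i
    have hx₀ : x₀ i ≠ 0 := fun h0 =>
      hi (Real.sign_eq_zero_iff.1 (by rw [hsign_i, h0, Real.sign_zero]))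
    rw [hsign_i, hM_supp i hx₀]
  · rw [mulVec_sub, mulVec_smul, sub_sub_cancel_left, neg_vecMul, smul_vecMul, ← mulVec_transpose,
      mulVec_mulVec, neg_smul]
end

section
/- Let T : ℝⁿ ⇉ ℝⁿ be a maximal monotone operator, let x̄, ū, w, z ∈ ℝⁿ with ū ∈ T(x̄), and suppose z belongs to the limiting coderivative D*T(x̄ | ū)(w). Then ⟨z, w⟩ ≥ 0. -/
open Finset Filter

/-- Euclidean inner product on ℝⁿ. -/
def dotR {n : ℕ} (x y : Fin n → ℝ) : ℝ := ∑ i, x i * y i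

/-- Inner product on pairs (the product Hilbert space ℝⁿ × ℝⁿ). -/
def pdot {n : ℕ} (p q : (Fin n → ℝ) × (Fin n → ℝ)) : ℝ := dotR p.1 q.1 + dotR p.2 q.2

/-- Euclidean norm on pairs. -/
noncomputable def pnorm {n : ℕ} (p : (Fin n → ℝ) × (Fin n → ℝ)) : ℝ :=
  Real.sqrt (pdot p p)

/-- Graph of a set-valued map. -/
def gph {n : ℕ} (T : (Fin n → ℝ) → Set (Fin n → ℝ)) : Set ((Fin n → ℝ) × (Fin n → ℝ)) :=
  {p | p.2 ∈ T p.1}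

/-- Regular (Fréchet) normal cone to a set `s` at `x`. -/
def frechetNormal {n : ℕ} (s : Set ((Fin n → ℝ) × (Fin n → ℝ)))
    (x : (Fin n → ℝ) × (Fin n → ℝ)) : Set ((Fin n → ℝ) × (Fin n → ℝ)) :=
  {v | ∀ ε > (0:ℝ), ∃ δ > (0:ℝ), ∀ y ∈ s, pnorm (y - x) < δ →
    pdot v (y - x) ≤ ε * pnorm (y - x)}

/-- Limiting (Mordukhovich) normal cone to a set `s` at `x`. -/
def limitingNormal {n : ℕ} (s : Set ((Fin n → ℝ) × (Fin n → ℝ)))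
    (x : (Fin n → ℝ) × (Fin n → ℝ)) : Set ((Fin n → ℝ) × (Fin n → ℝ)) :=
  {v | ∃ xs vs : ℕ → (Fin n → ℝ) × (Fin n → ℝ),
    (∀ k, xs k ∈ s) ∧ (∀ k, vs k ∈ frechetNormal s (xs k)) ∧
    Tendsto xs atTop (nhds x) ∧ Tendsto vs atTop (nhds v)}

namespace Aux
variable {n : ℕ}

lemma dotR_comm (x y : Fin n → ℝ) : dotR x y = dotR y x := by
  simp [dotR, mul_comm]
lemma dotR_add_left (x y z : Fin n → ℝ) : dotR (x + y) z = dotR x z + dotR y z := by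
  simp [dotR, add_mul, Finset.sum_add_distrib]
lemma dotR_add_right (x y z : Fin n → ℝ) : dotR x (y + z) = dotR x y + dotR x z := by
  simp [dotR, mul_add, Finset.sum_add_distrib]
lemma dotR_sub_left (x y z : Fin n → ℝ) : dotR (x - y) z = dotR x z - dotR y z := by
  simp [dotR, sub_mul, Finset.sum_sub_distrib]
lemma dotR_sub_right (x y z : Fin n → ℝ) : dotR x (y - z) = dotR x y - dotR x z := by
  simp [dotR, mul_sub, Finset.sum_sub_distrib]
lemma dotR_smul_left (c : ℝ) (x y : Fin n → ℝ) : dotR (c • x) y = c * dotR x y := by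
  simp [dotR, Finset.mul_sum, mul_assoc]
lemma dotR_smul_right (c : ℝ) (x y : Fin n → ℝ) : dotR x (c • y) = c * dotR x y := by
  rw [dotR_comm, dotR_smul_left, dotR_comm]
lemma dotR_neg_left (x y : Fin n → ℝ) : dotR (-x) y = -dotR x y := by
  simp [dotR]
lemma dotR_neg_right (x y : Fin n → ℝ) : dotR x (-y) = -dotR x y := by
  simp [dotR]
lemma dotR_self_nonneg (x : Fin n → ℝ) : 0 ≤ dotR x x :=
  Finset.sum_nonneg fun i _ => mul_self_nonneg _

noncomputable def nrm (x : Fin n → ℝ) : ℝ := Real.sqrt (dotR x x)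

lemma nrm_nonneg (x : Fin n → ℝ) : 0 ≤ nrm x := Real.sqrt_nonneg _
lemma dotR_self_eq_sq (x : Fin n → ℝ) : dotR x x = nrm x ^ 2 :=
  (Real.sq_sqrt (dotR_self_nonneg x)).symm
lemma dotR_le_nrm_mul_nrm (x y : Fin n → ℝ) : dotR x y ≤ nrm x * nrm y := by
  have := Real.sum_mul_le_sqrt_mul_sqrt (Finset.univ : Finset (Fin n)) x y
  simpa [dotR, nrm, sq] using this
lemma nrm_eq_zero_iff (x : Fin n → ℝ) : nrm x = 0 ↔ x = 0 := by
  rw [nrm, Real.sqrt_eq_zero (dotR_self_nonneg x)]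
  constructor
  · intro h
    funext i
    have h1 : ∀ j ∈ Finset.univ, 0 ≤ x j * x j := fun j _ => mul_self_nonneg _
    have h2 := (Finset.sum_eq_zero_iff_of_nonneg h1).1 h i (Finset.mem_univ i)
    have := mul_self_eq_zero.1 h2
    simpa using this
  · intro h; subst h; simp [dotR]
lemma eq_zero_of_dotR_self (x : Fin n → ℝ) (h : dotR x x ≤ 0) : x = 0 := by
  have h0 : dotR x x = 0 := le_antisymm h (dotR_self_nonneg x)
  rw [← nrm_eq_zero_iff]
  rw [nrm, h0, Real.sqrt_zero]
lemma nrm_pos_of_ne (x : Fin n → ℝ) (h : x ≠ 0) : 0 < nrm x :=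
  lt_of_le_of_ne (nrm_nonneg x) (fun h' => h ((nrm_eq_zero_iff x).1 h'.symm))
lemma nrm_triangle (x y : Fin n → ℝ) : nrm (x + y) ≤ nrm x + nrm y := by
  have hxy := dotR_le_nrm_mul_nrm x y
  have h : dotR (x+y) (x+y) ≤ (nrm x + nrm y)^2 := by
    rw [dotR_add_left, dotR_add_right, dotR_add_right, dotR_self_eq_sq, dotR_self_eq_sq,
      dotR_comm y x]
    nlinarith [hxy]
  calc nrm (x+y) = Real.sqrt (dotR (x+y) (x+y)) := rfl
  _ ≤ Real.sqrt ((nrm x + nrm y)^2) := Real.sqrt_le_sqrt h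
  _ = nrm x + nrm y := Real.sqrt_sq (by have := nrm_nonneg x; have := nrm_nonneg y; linarith)
lemma nrm_neg (x : Fin n → ℝ) : nrm (-x) = nrm x := by
  unfold nrm; rw [dotR_neg_left, dotR_neg_right, neg_neg]
lemma nrm_sub_le (x y : Fin n → ℝ) : nrm (x - y) ≤ nrm x + nrm y := by
  rw [sub_eq_add_neg]
  exact (nrm_triangle x (-y)).trans (by rw [nrm_neg])
lemma nrm_smul (c : ℝ) (x : Fin n → ℝ) : nrm (c • x) = |c| * nrm x := by
  unfold nrm
  rw [dotR_smul_left, dotR_smul_right, ← mul_assoc, Real.sqrt_mul (mul_self_nonneg c),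
    Real.sqrt_mul_self_eq_abs]
lemma neg_nrm_mul_nrm_le (x y : Fin n → ℝ) : -(nrm x * nrm y) ≤ dotR x y := by
  have := dotR_le_nrm_mul_nrm (-x) y
  rw [dotR_neg_left, nrm_neg] at this
  linarith
lemma pi_norm_le_nrm (x : Fin n → ℝ) : ‖x‖ ≤ nrm x := by
  rw [pi_norm_le_iff_of_nonneg (nrm_nonneg x)]
  intro i
  rw [Real.norm_eq_abs, ← Real.sqrt_sq_eq_abs]
  apply Real.sqrt_le_sqrt
  rw [sq]
  exact Finset.single_le_sum (f := fun j => x j * x j) (fun j _ => mul_self_nonneg _)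
    (Finset.mem_univ i)
lemma continuous_dotR {α : Type*} [TopologicalSpace α] {f g : α → Fin n → ℝ}
    (hf : Continuous f) (hg : Continuous g) : Continuous fun a => dotR (f a) (g a) := by
  unfold dotR
  exact continuous_finset_sum _ fun i _ =>
    ((continuous_apply i).comp hf).mul ((continuous_apply i).comp hg)

lemma expand1 (u b x a : Fin n → ℝ) :
    dotR (u - b) (x - a) = dotR x u - (dotR x b + dotR a u - dotR a b) := by
  rw [dotR_sub_left, dotR_sub_right, dotR_sub_right, dotR_comm u x, dotR_comm u a,
    dotR_comm b x, dotR_comm b a]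
  ring

lemma dotR_quad (c : ℝ) (x d : Fin n → ℝ) :
    dotR (x + c • d) (x + c • d) = dotR x x + 2*c*dotR x d + c^2 * dotR d d := by
  simp only [dotR_add_left, dotR_add_right, dotR_smul_left, dotR_smul_right, dotR_comm d x]
  ring

lemma dotR_quad1 (x d : Fin n → ℝ) :
    dotR (x + d) (x + d) = dotR x x + 2*dotR x d + dotR d d := by
  simp only [dotR_add_left, dotR_add_right, dotR_comm d x]
  ring

lemma dotR_sub_quad (a x : Fin n → ℝ) :
    dotR (a - x) (a - x) = dotR a a - 2*dotR a x + dotR x x := by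
  simp only [dotR_sub_left, dotR_sub_right, dotR_comm x a]
  ring

/-- Minty's theorem, base case: `0 ∈ range (I + T)`. -/
lemma minty0 (T : (Fin n → ℝ) → Set (Fin n → ℝ))
    (hmono : ∀ x₁ x₂ y₁ y₂, y₁ ∈ T x₁ → y₂ ∈ T x₂ → 0 ≤ dotR (y₁ - y₂) (x₁ - x₂))
    (hmax : ∀ x y, (∀ x' y', y' ∈ T x' → 0 ≤ dotR (y - y') (x - x')) → y ∈ T x)
    (a₀ b₀ : Fin n → ℝ) (h₀ : b₀ ∈ T a₀) :
    ∃ x u, u ∈ T x ∧ x + u = 0 := by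
  classical
  let C : Set ((Fin n → ℝ) × (Fin n → ℝ) × ℝ) :=
    {q | ∀ a b, b ∈ T a → dotR q.1 b + dotR a q.2.1 - dotR a b ≤ q.2.2}
  let g : ((Fin n → ℝ) × (Fin n → ℝ) × ℝ) → ℝ :=
    fun q => q.2.2 + (dotR q.1 q.1 + dotR q.2.1 q.2.1)/2
  have hC : ∀ a b, b ∈ T a → ((a, b, dotR a b) : _ × _ × ℝ) ∈ C := by
    intro a b hb a' b' hb'
    have h1 := hmono a a' b b' hb hb'
    rw [expand1] at h1
    show dotR a b' + dotR a' b - dotR a' b' ≤ dotR a b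
    linarith
  have hCcl : IsClosed C := by
    have hCi : C = ⋂ (r : {r : (Fin n → ℝ) × (Fin n → ℝ) // r.2 ∈ T r.1}),
        {q : (Fin n → ℝ) × (Fin n → ℝ) × ℝ |
          dotR q.1 r.1.2 + dotR r.1.1 q.2.1 - dotR r.1.1 r.1.2 ≤ q.2.2} := by
      ext q
      simp only [Set.mem_setOf_eq, Set.mem_iInter, Subtype.forall]
      constructor
      · intro h r hr; exact h r.1 r.2 hr
      · intro h a b hb; exact h (a, b) hb
    rw [hCi]
    apply isClosed_iInter
    intro r
    apply isClosed_le
    · apply Continuous.sub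
      apply Continuous.add
      · exact continuous_dotR continuous_fst continuous_const
      · exact continuous_dotR continuous_const (continuous_fst.comp continuous_snd)
      · exact continuous_const
    · exact continuous_snd.comp continuous_snd
  have hgcont : Continuous g := by
    apply Continuous.add
    · exact continuous_snd.comp continuous_snd
    · exact ((continuous_dotR continuous_fst continuous_fst).add
        (continuous_dotR (continuous_fst.comp continuous_snd)
          (continuous_fst.comp continuous_snd))).div_const 2
  have hq₀ : ((a₀, b₀, dotR a₀ b₀) : _ × _ × ℝ) ∈ C := hC a₀ b₀ h₀
  set M : ℝ := g (a₀, b₀, dotR a₀ b₀) with hMdef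
  set B : ℝ := Real.sqrt (max (2*M + 2*|dotR a₀ b₀| + nrm a₀^2 + nrm b₀^2) 0) with hBdef
  have hBnn : 0 ≤ B := Real.sqrt_nonneg _
  have hBsq : B^2 = max (2*M + 2*|dotR a₀ b₀| + nrm a₀^2 + nrm b₀^2) 0 :=
    Real.sq_sqrt (le_max_right _ _)
  have hMle : g (a₀, b₀, dotR a₀ b₀) ≤ M := le_of_eq hMdef.symm
  clear_value M B
  have hbound : ∀ q ∈ C, g q ≤ M →
      nrm q.1 ≤ nrm b₀ + B ∧ nrm q.2.1 ≤ nrm a₀ + B ∧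
      -((nrm b₀ + B)*nrm b₀ + nrm a₀*(nrm a₀ + B) + |dotR a₀ b₀|) ≤ q.2.2 ∧ q.2.2 ≤ M := by
    intro q hq hgq
    have h1 : dotR q.1 b₀ + dotR a₀ q.2.1 - dotR a₀ b₀ ≤ q.2.2 := hq a₀ b₀ h₀
    have h2 : -(nrm q.1 * nrm b₀) ≤ dotR q.1 b₀ := neg_nrm_mul_nrm_le q.1 b₀
    have h3 : -(nrm a₀ * nrm q.2.1) ≤ dotR a₀ q.2.1 := neg_nrm_mul_nrm_le a₀ q.2.1
    have h4 : dotR a₀ b₀ ≤ |dotR a₀ b₀| := le_abs_self _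
    have hgq' : q.2.2 + (nrm q.1^2 + nrm q.2.1^2)/2 ≤ M := by
      have he : g q = q.2.2 + (dotR q.1 q.1 + dotR q.2.1 q.2.1)/2 := rfl
      rw [he, dotR_self_eq_sq, dotR_self_eq_sq] at hgq
      exact hgq
    have hkey : (nrm q.1 - nrm b₀)^2 + (nrm q.2.1 - nrm a₀)^2 ≤ B^2 := by
      rw [hBsq]
      refine le_trans ?_ (le_max_left _ _)
      nlinarith [h1, h2, h3, h4, hgq']
    have hx : nrm q.1 ≤ nrm b₀ + B := by nlinarith [hkey, sq_nonneg (nrm q.2.1 - nrm a₀)]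
    have hu : nrm q.2.1 ≤ nrm a₀ + B := by nlinarith [hkey, sq_nonneg (nrm q.1 - nrm b₀)]
    refine ⟨hx, hu, ?_, ?_⟩
    · have n1 := nrm_nonneg q.1; have n2 := nrm_nonneg q.2.1
      have n3 := nrm_nonneg a₀; have n4 := nrm_nonneg b₀
      nlinarith [h1, h2, h3, h4, hx, hu]
    · nlinarith [hgq', sq_nonneg (nrm q.1), sq_nonneg (nrm q.2.1)]
  have hKcl : IsClosed (C ∩ {q | g q ≤ M}) := hCcl.inter (isClosed_le hgcont continuous_const)
  have hKbdd : Bornology.IsBounded (C ∩ {q | g q ≤ M}) := by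
    set R : ℝ := max (max (nrm b₀ + B) (nrm a₀ + B))
      (max M ((nrm b₀ + B)*nrm b₀ + nrm a₀*(nrm a₀ + B) + |dotR a₀ b₀|)) with hRdef
    apply Bornology.IsBounded.subset (Metric.isBounded_closedBall (x := 0) (r := R))
    intro q hq
    obtain ⟨h1, h2, h3, h4⟩ := hbound q hq.1 hq.2
    rw [Metric.mem_closedBall, dist_zero_right]
    rw [Prod.norm_def, Prod.norm_def]
    apply max_le
    · exact (pi_norm_le_nrm q.1).trans (h1.trans ((le_max_left _ _).trans (le_max_left _ _)))
    apply max_le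
    · exact (pi_norm_le_nrm q.2.1).trans (h2.trans ((le_max_right _ _).trans (le_max_left _ _)))
    · rw [Real.norm_eq_abs, abs_le]
      constructor
      · have h5 : (nrm b₀ + B)*nrm b₀ + nrm a₀*(nrm a₀ + B) + |dotR a₀ b₀| ≤ R :=
          (le_max_right _ _).trans (le_max_right _ _)
        linarith
      · exact h4.trans ((le_max_left _ _).trans (le_max_right _ _))
  have hKcomp : IsCompact (C ∩ {q | g q ≤ M}) :=
    Metric.isCompact_of_isClosed_isBounded hKcl hKbdd
  have hKne : (C ∩ {q | g q ≤ M}).Nonempty := ⟨(a₀, b₀, dotR a₀ b₀), hq₀, hMle⟩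
  obtain ⟨m, hmK, hmmin⟩ := hKcomp.exists_isMinOn hKne hgcont.continuousOn
  rw [isMinOn_iff] at hmmin
  have hminC : ∀ q ∈ C, g m ≤ g q := by
    intro q hq
    by_cases hgq : g q ≤ M
    · exact hmmin q ⟨hq, hgq⟩
    · have hlt : M ≤ g q := le_of_lt (lt_of_not_ge hgq)
      rw [hMdef] at hlt
      exact (hmmin _ ⟨hq₀, hMle⟩).trans hlt
  obtain ⟨x₀, u₀, t₀⟩ := m
  have hmC : ((x₀, u₀, t₀) : _ × _ × ℝ) ∈ C := hmK.1
  have hmC' : ∀ a b, b ∈ T a → dotR x₀ b + dotR a u₀ - dotR a b ≤ t₀ := fun a b hb => hmC a b hb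
  have hgm : g (x₀, u₀, t₀) = t₀ + (dotR x₀ x₀ + dotR u₀ u₀)/2 := rfl
  -- D1 : dotR x₀ u₀ ≤ t₀
  have hD1 : dotR x₀ u₀ ≤ t₀ := by
    by_cases h : u₀ ∈ T x₀
    · have := hmC' x₀ u₀ h
      linarith only [this]
    · have hne : ¬ (∀ x' y', y' ∈ T x' → 0 ≤ dotR (u₀ - y') (x₀ - x')) :=
        fun hcon => h (hmax x₀ u₀ hcon)
      push_neg at hne
      obtain ⟨a, b, hb, hlt⟩ := hne
      have hc := hmC' a b hb
      rw [expand1] at hlt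
      linarith only [hc, hlt]
  -- D2 : strong convexity of minimum
  have hsc : ∀ a b, b ∈ T a →
      g (x₀, u₀, t₀) + (dotR (a - x₀) (a - x₀) + dotR (b - u₀) (b - u₀))/2
        ≤ g (a, b, dotR a b) := by
    intro aa bb hbb
    have hqC : ((aa, bb, dotR aa bb) : _ × _ × ℝ) ∈ C := hC aa bb hbb
    set dx : Fin n → ℝ := aa - x₀ with hdx
    set du : Fin n → ℝ := bb - u₀ with hdu
    set dt : ℝ := dotR aa bb - t₀ with hdt
    have hDnn : 0 ≤ dotR dx dx + dotR du du :=
      add_nonneg (dotR_self_nonneg _) (dotR_self_nonneg _)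
    have e1 : x₀ + dx = aa := by rw [hdx]; abel
    have e2 : u₀ + du = bb := by rw [hdu]; abel
    have e3 : t₀ + dt = dotR aa bb := by rw [hdt]; ring
    clear_value dx du dt
    have hLlam : ∀ lam : ℝ, 0 < lam → lam ≤ 1 →
        0 ≤ (dt + dotR x₀ dx + dotR u₀ du) + lam * ((dotR dx dx + dotR du du)/2) := by
      intro lam hl0 hl1
      have hmem : ((x₀ + lam • dx, u₀ + lam • du, t₀ + lam * dt) : _ × _ × ℝ) ∈ C := by
        intro a b hb
        show dotR (x₀ + lam • dx) b + dotR a (u₀ + lam • du) - dotR a b ≤ t₀ + lam * dt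
        have h1 : dotR x₀ b + dotR a u₀ - dotR a b ≤ t₀ := hmC' a b hb
        have h2 : dotR aa b + dotR a bb - dotR a b ≤ dotR aa bb := hqC a b hb
        rw [← e3, ← e1, ← e2, dotR_add_left, dotR_add_right] at h2
        rw [dotR_add_left, dotR_smul_left, dotR_add_right, dotR_smul_right]
        have h4 := mul_le_mul_of_nonneg_left h1 (by linarith : (0:ℝ) ≤ 1 - lam)
        have h5 := mul_le_mul_of_nonneg_left h2 hl0.le
        ring_nf at h4 h5 ⊢
        linarith only [h4, h5]
      have hge := hminC _ hmem
      have hgexp : g (x₀ + lam • dx, u₀ + lam • du, t₀ + lam * dt)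
          = g (x₀, u₀, t₀) + lam * (dt + dotR x₀ dx + dotR u₀ du)
            + lam^2 * ((dotR dx dx + dotR du du)/2) := by
        show t₀ + lam * dt + (dotR (x₀ + lam • dx) (x₀ + lam • dx)
          + dotR (u₀ + lam • du) (u₀ + lam • du))/2 = _
        rw [dotR_quad, dotR_quad, hgm]
        ring
      rw [hgexp, hgm] at hge
      have h5 : 0 ≤ lam * ((dt + dotR x₀ dx + dotR u₀ du)
          + lam * ((dotR dx dx + dotR du du)/2)) := by
        ring_nf
        ring_nf at hge
        linarith only [hge]
      exact nonneg_of_mul_nonneg_right h5 hl0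
    have hL0 : 0 ≤ dt + dotR x₀ dx + dotR u₀ du := by
      by_contra hneg
      push_neg at hneg
      set L : ℝ := dt + dotR x₀ dx + dotR u₀ du with hLdef
      set D : ℝ := dotR dx dx + dotR du du with hDdef
      clear_value L D
      by_cases hD0 : D ≤ 0
      · have := hLlam 1 one_pos le_rfl
        linarith only [this, hneg, hD0]
      · push_neg at hD0
        have hlam0 : 0 < min 1 (-L/D) := by
          apply lt_min one_pos
          apply div_pos (by linarith) hD0
        have h6 := hLlam _ hlam0 (min_le_left _ _)
        have hle : min 1 (-L/D) * (D/2) ≤ (-L/D) * (D/2) :=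
          mul_le_mul_of_nonneg_right (min_le_right _ _) (by linarith)
        have heq : (-L/D) * (D/2) = -L/2 := by field_simp
        linarith only [h6, hle, heq, hneg]
    have hgq2 : g (aa, bb, dotR aa bb) = g (x₀, u₀, t₀) + (dt + dotR x₀ dx + dotR u₀ du)
        + (dotR dx dx + dotR du du)/2 := by
      show dotR aa bb + (dotR aa aa + dotR bb bb)/2 = _
      rw [← e3, ← e1, ← e2, dotR_quad1, dotR_quad1, hgm]
      ring
    rw [hgq2]
    linarith only [hL0, hDnn]
  -- D3 : key inequality for graph points
  have hkey : ∀ a b, b ∈ T a →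
      t₀ + dotR x₀ x₀ + dotR u₀ u₀ ≤ dotR a b + dotR a x₀ + dotR b u₀ := by
    intro a b hb
    have h7 := hsc a b hb
    rw [dotR_sub_quad a x₀, dotR_sub_quad b u₀, hgm] at h7
    have hgq3 : g (a, b, dotR a b) = dotR a b + (dotR a a + dotR b b)/2 := rfl
    rw [hgq3] at h7
    linarith only [h7]
  -- D4 : find a graph point on the other side
  obtain ⟨a, b, hb, hab⟩ : ∃ a b, b ∈ T a ∧ dotR (x₀ + b) (u₀ + a) ≤ 0 := by
    by_cases h : (-x₀) ∈ T (-u₀)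
    · refine ⟨-u₀, -x₀, h, ?_⟩
      rw [add_neg_cancel]
      simp [dotR]
    · have hne : ¬ (∀ x' y', y' ∈ T x' → 0 ≤ dotR (-x₀ - y') (-u₀ - x')) :=
        fun hcon => h (hmax (-u₀) (-x₀) hcon)
      push_neg at hne
      obtain ⟨a, b, hb, hlt⟩ := hne
      refine ⟨a, b, hb, ?_⟩
      have he : dotR (-x₀ - b) (-u₀ - a) = dotR (x₀ + b) (u₀ + a) := by
        have e1 : -x₀ - b = -(x₀ + b) := by abel
        have e2 : -u₀ - a = -(u₀ + a) := by abel
        rw [e1, e2, dotR_neg_left, dotR_neg_right, neg_neg]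
      rw [he] at hlt
      exact hlt.le
  have hexp2 : dotR (x₀ + b) (u₀ + a) = dotR x₀ u₀ + dotR a x₀ + dotR b u₀ + dotR a b := by
    simp only [dotR_add_left, dotR_add_right]
    rw [dotR_comm x₀ a, dotR_comm b a]
    ring
  have hab' : dotR a b + dotR a x₀ + dotR b u₀ ≤ -dotR x₀ u₀ := by
    rw [hexp2] at hab
    linarith only [hab]
  have hkey2 := hkey a b hb
  have hsum0 : dotR (x₀ + u₀) (x₀ + u₀) ≤ 0 := by
    rw [dotR_quad1]
    linarith only [hkey2, hab', hD1]
  have hsum : x₀ + u₀ = 0 := eq_zero_of_dotR_self _ hsum0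
  have hexp3 : dotR x₀ x₀ + dotR u₀ u₀ = -2 * dotR x₀ u₀ := by
    have h0 : dotR (x₀ + u₀) (x₀ + u₀) = 0 := le_antisymm hsum0 (dotR_self_nonneg _)
    rw [dotR_quad1] at h0
    linarith only [h0]
  have ht₀eq : t₀ = dotR x₀ u₀ := by linarith only [hkey2, hab', hD1, hexp3]
  have hmem : u₀ ∈ T x₀ := by
    apply hmax
    intro a' b' hb'
    have hc := hmC' a' b' hb'
    rw [ht₀eq] at hc
    rw [expand1]
    linarith only [hc]
  exact ⟨x₀, u₀, hmem, hsum⟩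

/-- Minty's theorem, scaled and translated: `p ∈ range (I + lam•T)`. -/
lemma minty_scaled (T : (Fin n → ℝ) → Set (Fin n → ℝ))
    (hmono : ∀ x₁ x₂ y₁ y₂, y₁ ∈ T x₁ → y₂ ∈ T x₂ → 0 ≤ dotR (y₁ - y₂) (x₁ - x₂))
    (hmax : ∀ x y, (∀ x' y', y' ∈ T x' → 0 ≤ dotR (y - y') (x - x')) → y ∈ T x)
    (a₀ b₀ : Fin n → ℝ) (h₀ : b₀ ∈ T a₀) (lam : ℝ) (hlam : 0 < lam) (p : Fin n → ℝ) :
    ∃ x u, u ∈ T x ∧ x + lam • u = p := by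
  set T' : (Fin n → ℝ) → Set (Fin n → ℝ) := fun y => (fun u => lam • u - p) '' (T y) with hT'
  have hmono' : ∀ x₁ x₂ y₁ y₂, y₁ ∈ T' x₁ → y₂ ∈ T' x₂ → 0 ≤ dotR (y₁ - y₂) (x₁ - x₂) := by
    intro x₁ x₂ y₁ y₂ hy₁ hy₂
    obtain ⟨u₁, hu₁, rfl⟩ := hy₁
    obtain ⟨u₂, hu₂, rfl⟩ := hy₂
    have he : lam • u₁ - p - (lam • u₂ - p) = lam • (u₁ - u₂) := by
      rw [smul_sub]; abel
    rw [he, dotR_smul_left]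
    exact mul_nonneg hlam.le (hmono x₁ x₂ u₁ u₂ hu₁ hu₂)
  have hmax' : ∀ x y, (∀ x' y', y' ∈ T' x' → 0 ≤ dotR (y - y') (x - x')) → y ∈ T' x := by
    intro x y hy
    have hu : lam⁻¹ • (y + p) ∈ T x := by
      apply hmax
      intro x' u' hu'
      have h1 := hy x' (lam • u' - p) ⟨u', hu', rfl⟩
      have he : y - (lam • u' - p) = lam • (lam⁻¹ • (y + p) - u') := by
        rw [smul_sub, smul_smul, mul_inv_cancel₀ hlam.ne', one_smul]
        abel
      rw [he, dotR_smul_left] at h1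
      exact nonneg_of_mul_nonneg_right h1 hlam
    refine ⟨lam⁻¹ • (y + p), hu, ?_⟩
    show lam • (lam⁻¹ • (y + p)) - p = y
    rw [smul_smul, mul_inv_cancel₀ hlam.ne', one_smul]
    abel
  have h₀' : lam • b₀ - p ∈ T' a₀ := ⟨b₀, h₀, rfl⟩
  obtain ⟨x, v, hv, hxv⟩ := minty0 T' hmono' hmax' a₀ (lam • b₀ - p) h₀'
  obtain ⟨u, hu, rfl⟩ := hv
  refine ⟨x, u, hu, ?_⟩
  have : x + lam • u - p = 0 := by rw [← hxv]; abel
  have h2 := sub_eq_zero.mp this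
  exact h2

/-- A Fréchet normal `q` to the graph of a maximal monotone operator satisfies
`⟨q.1, q.2⟩ ≤ 0`. -/
lemma frechet_nonpos (T : (Fin n → ℝ) → Set (Fin n → ℝ))
    (hmono : ∀ x₁ x₂ y₁ y₂, y₁ ∈ T x₁ → y₂ ∈ T x₂ → 0 ≤ dotR (y₁ - y₂) (x₁ - x₂))
    (hmax : ∀ x y, (∀ x' y', y' ∈ T x' → 0 ≤ dotR (y - y') (x - x')) → y ∈ T x)
    (p : (Fin n → ℝ) × (Fin n → ℝ)) (hp : p ∈ gph T)
    (q : (Fin n → ℝ) × (Fin n → ℝ)) (hq : q ∈ frechetNormal (gph T) p) :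
    dotR q.1 q.2 ≤ 0 := by
  by_contra hpos
  push_neg at hpos
  set z : Fin n → ℝ := q.1 with hz
  set w : Fin n → ℝ := -q.2 with hw
  set c : ℝ := dotR q.1 q.2 with hcdef
  have hcpos : 0 < c := hpos
  have hc : dotR z w = -c := by rw [hz, hw, dotR_neg_right, hcdef]
  have hqzw : q = (z, -w) := by rw [hz, hw, neg_neg]
  clear_value z w c
  -- choose the scaling parameter
  set lam : ℝ := max 1 (4 * dotR w w / c) with hlam
  have hlam1 : 1 ≤ lam := le_max_left _ _
  have hlamge : 4 * dotR w w / c ≤ lam := le_max_right _ _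
  clear_value lam
  have hlampos : 0 < lam := lt_of_lt_of_le one_pos hlam1
  have hwsc : lam⁻¹ * dotR w w ≤ c / 4 := by
    have h2 : 4 * dotR w w ≤ lam * c := by
      rw [div_le_iff₀ hcpos] at hlamge
      linarith
    rw [inv_mul_eq_div, div_le_div_iff₀ hlampos (by norm_num : (0:ℝ) < 4)]
    nlinarith [h2, hlampos]
  set v : Fin n → ℝ := z + lam⁻¹ • w with hv
  have hvdot : ∀ r, dotR v r = dotR z r + lam⁻¹ * dotR w r := by
    intro r
    rw [hv, dotR_add_left, dotR_smul_left]
  have hwv : dotR w v ≤ -(3/4) * c := by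
    rw [dotR_comm, hvdot w, hc]
    linarith
  clear_value v
  have hvne : v ≠ 0 := by
    intro h0
    rw [h0] at hwv
    have h1 : dotR w (0 : Fin n → ℝ) = 0 := by simp [dotR]
    rw [h1] at hwv
    nlinarith
  have hNv : 0 < nrm v := nrm_pos_of_ne v hvne
  -- get δ from the Fréchet normal property
  set ε : ℝ := c / (8 * lam * nrm v) with hε
  have hεpos : 0 < ε := by
    rw [hε]
    apply div_pos hcpos
    positivity
  obtain ⟨δ, hδpos, hfre⟩ := hq ε hεpos
  clear_value ε
  set t : ℝ := δ / (3 * nrm v + 1) with ht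
  have htpos : 0 < t := by
    rw [ht]
    apply div_pos hδpos
    positivity
  have hteq : t * (3 * nrm v + 1) = δ := by
    rw [ht]
    field_simp
  clear_value t
  have htv : 3 * t * nrm v < δ := by nlinarith [htpos, nrm_nonneg v, hteq]
  -- solve the resolvent inclusion
  obtain ⟨x, u, hu, hxu⟩ := minty_scaled T hmono hmax p.1 p.2 hp lam hlampos
    (p.1 + lam • p.2 + t • v)
  set α : Fin n → ℝ := x - p.1 with hα
  set β : Fin n → ℝ := u - p.2 with hβ
  have hαβ : α + lam • β = t • v := by
    rw [hα, hβ, smul_sub]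
    rw [eq_comm, ← sub_eq_zero] at hxu ⊢
    rw [← hxu]
    abel
  have hβα : 0 ≤ dotR β α := hmono x p.1 u p.2 hu hp
  have hydiff : ((x, u) : (Fin n → ℝ) × (Fin n → ℝ)) - p = (α, β) := by
    rw [hα, hβ]
    rfl
  clear_value α β
  -- bounds on α and β
  have hαv : 0 ≤ dotR v α := by
    have h1 : dotR (t • v) α = dotR α α + lam * dotR β α := by
      rw [← hαβ, dotR_add_left, dotR_smul_left]
    rw [dotR_smul_left] at h1
    have h2 : 0 ≤ t * dotR v α := by
      rw [h1]
      have := dotR_self_nonneg α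
      nlinarith
    exact nonneg_of_mul_nonneg_right h2 htpos
  have hnα : nrm α ≤ t * nrm v := by
    have h1 : α = t • v - lam • β := by rw [← hαβ]; abel
    have h2 : dotR α α = t * dotR α v - lam * dotR α β := by
      calc dotR α α = dotR α (t • v - lam • β) := by rw [← h1]
      _ = t * dotR α v - lam * dotR α β := by
          rw [dotR_sub_right, dotR_smul_right, dotR_smul_right]
    have h3 : dotR α α ≤ t * (nrm α * nrm v) := by
      have h4 := dotR_le_nrm_mul_nrm α v
      have h5 : 0 ≤ lam * dotR α β := mul_nonneg hlampos.le (by rw [dotR_comm]; exact hβα)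
      nlinarith
    rcases eq_or_lt_of_le (nrm_nonneg α) with h6 | h6
    · rw [← h6]
      positivity
    · have h7 : nrm α * nrm α ≤ (t * nrm v) * nrm α := by
        rw [dotR_self_eq_sq, sq] at h3
        nlinarith
      exact le_of_mul_le_mul_right h7 h6
  have hnβ : nrm β ≤ 2 * t * nrm v := by
    have h1 : lam • β = t • v - α := by rw [← hαβ]; abel
    have h2 : nrm (lam • β) ≤ 2 * t * nrm v := by
      rw [h1]
      refine (nrm_sub_le _ _).trans ?_
      rw [nrm_smul]
      rw [abs_of_pos htpos]
      linarith
    rw [nrm_smul, abs_of_pos hlampos] at h2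
    nlinarith [nrm_nonneg β]
  -- apply the Fréchet normal inequality at (x, u)
  have hygph : ((x, u) : (Fin n → ℝ) × (Fin n → ℝ)) ∈ gph T := hu
  have hpn : pnorm ((x, u) - p) ≤ 3 * t * nrm v := by
    rw [hydiff]
    have h1 : pdot ((α, β) : (Fin n → ℝ) × (Fin n → ℝ)) (α, β) = dotR α α + dotR β β := rfl
    have h2 : dotR α α + dotR β β ≤ (3 * t * nrm v)^2 := by
      rw [dotR_self_eq_sq, dotR_self_eq_sq]
      have e1 : nrm α^2 ≤ (t * nrm v)^2 := pow_le_pow_left₀ (nrm_nonneg α) hnα 2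
      have e2 : nrm β^2 ≤ (2 * t * nrm v)^2 := pow_le_pow_left₀ (nrm_nonneg β) hnβ 2
      have e3 : (2 * t * nrm v)^2 = 4 * (t * nrm v)^2 := by ring
      have e4 : (3 * t * nrm v)^2 = 9 * (t * nrm v)^2 := by ring
      linarith only [e1, e2, e3, e4, sq_nonneg (t * nrm v)]
    have h3 : pnorm ((α, β) : (Fin n → ℝ) × (Fin n → ℝ))
        = Real.sqrt (dotR α α + dotR β β) := rfl
    calc pnorm ((α, β) : (Fin n → ℝ) × (Fin n → ℝ)) = Real.sqrt (dotR α α + dotR β β) := h3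
    _ ≤ Real.sqrt ((3 * t * nrm v)^2) := Real.sqrt_le_sqrt h2
    _ = 3 * t * nrm v := Real.sqrt_sq (by positivity)
  have hlt : pnorm ((x, u) - p) < δ := lt_of_le_of_lt hpn htv
  have hineq := hfre (x, u) hygph hlt
  have hub : pdot q ((x, u) - p) ≤ ε * (3 * t * nrm v) :=
    hineq.trans (mul_le_mul_of_nonneg_left hpn hεpos.le)
  -- compute a lower bound for the left side
  have hlhs : pdot q ((x, u) - p) = dotR z α - dotR w β := by
    rw [hydiff, hqzw]
    have h1 : pdot ((z, -w) : (Fin n → ℝ) × (Fin n → ℝ)) (α, β)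
        = dotR z α + dotR (-w) β := rfl
    rw [h1, dotR_neg_left]
    ring
  have hwβ : lam * dotR w β = t * dotR w v - dotR w α := by
    have h0 : lam • β = t • v - α := by rw [← hαβ]; abel
    have h1 : dotR w (lam • β) = dotR w (t • v - α) := by rw [h0]
    rw [dotR_smul_right, dotR_sub_right, dotR_smul_right t w v] at h1
    linarith [h1]
  have hvα : lam * dotR v α = lam * dotR z α + dotR w α := by
    rw [hvdot α, mul_add, ← mul_assoc, mul_inv_cancel₀ hlampos.ne', one_mul]
  have hlow : (3/4) * c * t ≤ lam * pdot q ((x, u) - p) := by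
    rw [hlhs, mul_sub, hwβ]
    have h1 : 0 ≤ lam * dotR v α := mul_nonneg hlampos.le hαv
    have h2 : t * dotR w v ≤ t * (-(3/4) * c) := mul_le_mul_of_nonneg_left hwv htpos.le
    ring_nf at h1 h2 hvα ⊢
    linarith only [h1, h2, hvα]
  have hup : lam * pdot q ((x, u) - p) ≤ (3/8) * c * t := by
    have h1 : lam * (ε * (3 * t * nrm v)) = (3/8) * c * t := by
      rw [hε]
      field_simp
    calc lam * pdot q ((x, u) - p) ≤ lam * (ε * (3 * t * nrm v)) :=
          mul_le_mul_of_nonneg_left hub hlampos.le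
    _ = (3/8) * c * t := h1
  have hfin := mul_pos hcpos htpos
  ring_nf at hlow hup hfin
  linarith only [hlow, hup, hfin]

end Aux

/-- Coderivatives of maximal monotone operators are positive-semidefinite:
if `z ∈ D*T(x̄ | ū)(w)` then `⟨z, w⟩ ≥ 0`. -/
theorem coderivative_maximal_monotone_psd {n : ℕ}
    (T : (Fin n → ℝ) → Set (Fin n → ℝ))
    (hmono : ∀ x₁ x₂ y₁ y₂, y₁ ∈ T x₁ → y₂ ∈ T x₂ → 0 ≤ dotR (y₁ - y₂) (x₁ - x₂))
    (hmax : ∀ x y, (∀ x' y', y' ∈ T x' → 0 ≤ dotR (y - y') (x - x')) → y ∈ T x)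
    (xbar ubar w z : Fin n → ℝ) (hubar : ubar ∈ T xbar)
    (hz : (z, -w) ∈ limitingNormal (gph T) (xbar, ubar)) :
    0 ≤ dotR z w := by
  obtain ⟨xs, vs, hxs, hvs, hxt, hvt⟩ := hz
  have hk : ∀ k, dotR (vs k).1 (vs k).2 ≤ 0 := fun k =>
    Aux.frechet_nonpos T hmono hmax (xs k) (hxs k) (vs k) (hvs k)
  have hcont : Continuous fun p : (Fin n → ℝ) × (Fin n → ℝ) => dotR p.1 p.2 :=
    Aux.continuous_dotR continuous_fst continuous_snd
  have hlim : Tendsto (fun k => dotR (vs k).1 (vs k).2) atTop (nhds (dotR z (-w))) := by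
    have := (hcont.tendsto ((z, -w) : (Fin n → ℝ) × (Fin n → ℝ))).comp hvt
    exact this
  have hle : dotR z (-w) ≤ 0 := le_of_tendsto hlim (Filter.Eventually.of_forall hk)
  rw [Aux.dotR_neg_right] at hle
  linarith
end

section
/- Let x̄ be a minimizer of the LASSO objective φ(x) = (1/2λ)‖Ax − b‖² + ‖x‖₁ for λ > 0, with equicorrelation set J = {i : |A_i^T(b − Ax̄)| = λ}, and assume A_J has full column rank. Define T(x) = (1/λ)A^T(Ax − b) + ∂‖·‖₁(x). Then the coderivative of T at (x̄, 0) has trivial kernel: if 0 ∈ D*T(x̄ | 0)(w) then w = 0. -/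
open Finset Filter

/-- Convex subdifferential of the ℓ1-norm. -/
def subdiffL1 {n : ℕ} (x : Fin n → ℝ) : Set (Fin n → ℝ) :=
  {v | ∀ y, l1 x + dotR v (y - x) ≤ l1 y}

namespace LassoAux

/-- Graph of the one-dimensional subdifferential of `|·|`, as a subgradient inequality. -/
def G1 (t s : ℝ) : Prop := ∀ r : ℝ, |t| + s * (r - t) ≤ |r|

lemma g1_abs_le {t s : ℝ} (h : G1 t s) : |s| ≤ 1 := by
  have h1 := h (t + 1)
  have h2 := h (t - 1)
  have b1 : |t + 1| ≤ |t| + 1 := by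
    calc |t + 1| ≤ |t| + |(1:ℝ)| := abs_add_le _ _
    _ = |t| + 1 := by norm_num
  have b2 : |t - 1| ≤ |t| + 1 := by
    calc |t - 1| ≤ |t| + |(1:ℝ)| := abs_sub _ _
    _ = |t| + 1 := by norm_num
  rw [abs_le]
  constructor <;> nlinarith [h1, h2]

lemma g1_pos {t s : ℝ} (ht : 0 < t) (h : G1 t s) : s = 1 := by
  have h0 := h 0
  rw [abs_zero] at h0
  have habs : |t| = t := abs_of_pos ht
  have hle : |s| ≤ 1 := g1_abs_le h
  rw [abs_le] at hle
  nlinarith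

lemma g1_neg {t s : ℝ} (ht : t < 0) (h : G1 t s) : s = -1 := by
  have h0 := h 0
  rw [abs_zero] at h0
  have habs : |t| = -t := abs_of_neg ht
  have hle : |s| ≤ 1 := g1_abs_le h
  rw [abs_le] at hle
  nlinarith

lemma g1_zero {s : ℝ} (hs : |s| ≤ 1) : G1 0 s := by
  intro r
  have h1 : s * r ≤ |s * r| := le_abs_self _
  rw [abs_mul] at h1
  have h2 : s * (r - 0) ≤ |s| * |r| := by simpa using h1
  have hr : |s| * |r| ≤ 1 * |r| := mul_le_mul_of_nonneg_right hs (abs_nonneg r)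
  simp only [abs_zero]
  nlinarith

lemma g1_one {t : ℝ} (ht : 0 ≤ t) : G1 t 1 := by
  intro r
  rw [abs_of_nonneg ht]
  have := le_abs_self r
  linarith

lemma g1_negone {t : ℝ} (ht : t ≤ 0) : G1 t (-1) := by
  intro r
  rw [abs_of_nonpos ht]
  have := neg_abs_le r
  linarith

lemma subdiff_iff {n : ℕ} (x v : Fin n → ℝ) :
    v ∈ subdiffL1 x ↔ ∀ i, G1 (x i) (v i) := by
  constructor
  · intro h i r
    have hy := h (Function.update x i r)
    have A1 : dotR v (Function.update x i r - x) = v i * (r - x i) := by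
      unfold dotR
      rw [Finset.sum_eq_single i]
      · simp [Function.update_self]
      · intro j _ hj
        simp [Function.update_of_ne hj]
      · simp
    have A2 : l1 (Function.update x i r) - l1 x = |r| - |x i| := by
      unfold l1
      rw [← Finset.sum_sub_distrib]
      rw [Finset.sum_eq_single i]
      · simp [Function.update_self]
      · intro j _ hj
        simp [Function.update_of_ne hj]
      · simp
    have hG : |x i| + v i * (r - x i) ≤ |r| := by linarith
    exact hG
  · intro h y
    have hpt : ∀ i, |x i| + v i * (y i - x i) ≤ |y i| := fun i => h i (y i)
    unfold l1 dotR
    have hle : ∑ i, (|x i| + v i * (y i - x i)) ≤ ∑ i, |y i| :=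
      Finset.sum_le_sum fun i _ => hpt i
    rw [Finset.sum_add_distrib] at hle
    calc (∑ i, |x i|) + ∑ i, v i * (y - x) i
        = (∑ i, |x i|) + ∑ i, v i * (y i - x i) := by
          simp only [Pi.sub_apply]
    _ ≤ ∑ i, |y i| := hle

lemma dotR_comm {n : ℕ} (x y : Fin n → ℝ) : dotR x y = dotR y x := by
  unfold dotR; exact Finset.sum_congr rfl fun i _ => mul_comm _ _

lemma dotR_add_right {n : ℕ} (x y z : Fin n → ℝ) :
    dotR x (y + z) = dotR x y + dotR x z := by
  unfold dotR
  rw [← Finset.sum_add_distrib]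
  exact Finset.sum_congr rfl fun i _ => by simp only [Pi.add_apply]; ring

lemma dotR_smul_right {n : ℕ} (c : ℝ) (x y : Fin n → ℝ) :
    dotR x (c • y) = c * dotR x y := by
  unfold dotR
  rw [Finset.mul_sum]
  exact Finset.sum_congr rfl fun i _ => by simp [Pi.smul_apply, smul_eq_mul]; ring

lemma dotR_smul_left {n : ℕ} (c : ℝ) (x y : Fin n → ℝ) :
    dotR (c • x) y = c * dotR x y := by
  rw [dotR_comm, dotR_smul_right, dotR_comm]

lemma dotR_neg_left {n : ℕ} (x y : Fin n → ℝ) : dotR (-x) y = -dotR x y := by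
  unfold dotR
  rw [← Finset.sum_neg_distrib]
  exact Finset.sum_congr rfl fun i _ => by simp

lemma dotR_single {n : ℕ} (x : Fin n → ℝ) (i : Fin n) :
    dotR x (Pi.single i 1) = x i := by
  unfold dotR
  rw [Finset.sum_eq_single i]
  · simp
  · intro j _ hj; simp [Pi.single_apply, hj]
  · simp

lemma dotR_self_nonneg {n : ℕ} (x : Fin n → ℝ) : 0 ≤ dotR x x :=
  Finset.sum_nonneg fun i _ => mul_self_nonneg _

lemma adjoint {m n : ℕ} (A : Matrix (Fin m) (Fin n) ℝ) (y : Fin m → ℝ) (x : Fin n → ℝ) :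
    dotR (A.transpose.mulVec y) x = ∑ j, y j * A.mulVec x j := by
  unfold dotR Matrix.mulVec dotProduct
  simp only [Matrix.transpose_apply, Finset.sum_mul, Finset.mul_sum]
  rw [Finset.sum_comm]
  exact Finset.sum_congr rfl fun j _ => Finset.sum_congr rfl fun i _ => by ring

lemma ray {m n : ℕ} (A : Matrix (Fin m) (Fin n) ℝ) (b : Fin m → ℝ) (lam : ℝ) (hlam : 0 < lam)
    (T : (Fin n → ℝ) → Set (Fin n → ℝ))
    (hT : ∀ x, T x = {u | ∃ v ∈ subdiffL1 x,
      u = (1/lam) • Matrix.mulVec A.transpose (A.mulVec x - b) + v})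
    (p v : (Fin n → ℝ) × (Fin n → ℝ)) (hp : p ∈ gph T)
    (hv : v ∈ frechetNormal (gph T) p)
    (i : Fin n) (a c : ℝ) (hac : a ≠ 0 ∨ c ≠ 0) (t0 : ℝ) (ht0 : 0 < t0)
    (hadm : ∀ t : ℝ, 0 < t → t ≤ t0 →
      G1 (p.1 i + t * a)
        ((p.2 - (1/lam) • Matrix.mulVec A.transpose (A.mulVec p.1 - b)) i + t * c)) :
    a * (v.1 i + ((1/lam) • Matrix.mulVec A.transpose (A.mulVec v.2)) i) + c * v.2 i ≤ 0 := by
  classical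
  by_contra hcon
  push_neg at hcon
  set e : Fin n → ℝ := Pi.single i 1 with he
  have hei : e i = 1 := by rw [he]; simp
  set s : Fin n → ℝ := p.2 - (1/lam) • Matrix.mulVec A.transpose (A.mulVec p.1 - b) with hs
  have hsmem : s ∈ subdiffL1 p.1 := by
    have hp' : p.2 ∈ T p.1 := hp
    rw [hT p.1] at hp'
    obtain ⟨v0, hv0, hpe⟩ := hp'
    have hsv : s = v0 := by rw [hs, hpe]; abel
    rwa [hsv]
  set Me : Fin n → ℝ := (1/lam) • Matrix.mulVec A.transpose (A.mulVec e) with hMe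
  set ξ : (Fin n → ℝ) × (Fin n → ℝ) := (a • e, c • e + a • Me) with hξ
  have hMve : dotR v.2 Me = ((1/lam) • Matrix.mulVec A.transpose (A.mulVec v.2)) i := by
    rw [hMe, dotR_smul_right]
    have h1 : dotR v.2 (A.transpose.mulVec (A.mulVec e)) =
        dotR (A.transpose.mulVec (A.mulVec v.2)) e := by
      rw [dotR_comm, adjoint, adjoint]
      exact Finset.sum_congr rfl fun j _ => mul_comm _ _
    rw [h1, he, dotR_single]
    simp [Pi.smul_apply]
  have hr : pdot v ξ =
      a * (v.1 i + ((1/lam) • Matrix.mulVec A.transpose (A.mulVec v.2)) i) + c * v.2 i := by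
    show dotR v.1 (a • e) + dotR v.2 (c • e + a • Me) = _
    rw [dotR_smul_right, dotR_add_right, dotR_smul_right, dotR_smul_right, hMve]
    rw [he, dotR_single, dotR_single]
    ring
  have hrpos : 0 < pdot v ξ := by rw [hr]; exact hcon
  have hK2 : 0 < pdot ξ ξ := by
    rcases hac with ha | hc
    · have h1 : dotR ξ.1 ξ.1 = a * a := by
        show dotR (a • e) (a • e) = a * a
        rw [dotR_smul_left, dotR_smul_right, he, dotR_single]
        simp
      have h2 : 0 ≤ dotR ξ.2 ξ.2 := dotR_self_nonneg _
      have h3 : pdot ξ ξ = a * a + dotR ξ.2 ξ.2 := by rw [pdot, h1]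
      nlinarith [mul_self_pos.mpr ha]
    · by_cases ha : a = 0
      · have h1 : 0 ≤ dotR ξ.1 ξ.1 := dotR_self_nonneg _
        have h2 : dotR ξ.2 ξ.2 = c * c := by
          show dotR (c • e + a • Me) (c • e + a • Me) = c * c
          rw [ha]
          simp only [zero_smul, add_zero]
          rw [dotR_smul_left, dotR_smul_right, he, dotR_single]
          simp
        have h3 : pdot ξ ξ = dotR ξ.1 ξ.1 + c * c := by rw [pdot, h2]
        nlinarith [mul_self_pos.mpr hc]
      · have h1 : dotR ξ.1 ξ.1 = a * a := by
          show dotR (a • e) (a • e) = a * a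
          rw [dotR_smul_left, dotR_smul_right, he, dotR_single]
          simp
        have h2 : 0 ≤ dotR ξ.2 ξ.2 := dotR_self_nonneg _
        have h3 : pdot ξ ξ = a * a + dotR ξ.2 ξ.2 := by rw [pdot, h1]
        nlinarith [mul_self_pos.mpr ha]
  set K : ℝ := pnorm ξ with hKdef
  have hK : 0 < K := by rw [hKdef]; exact Real.sqrt_pos.mpr hK2
  set ε : ℝ := pdot v ξ / (2 * K) with hε
  have hεpos : 0 < ε := by rw [hε]; positivity
  obtain ⟨δ, hδpos, hδ⟩ := hv ε hεpos
  set t : ℝ := min t0 (δ / (2 * K)) with htdef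
  have htpos : 0 < t := lt_min ht0 (by positivity)
  have htt0 : t ≤ t0 := min_le_left _ _
  set q : (Fin n → ℝ) × (Fin n → ℝ) :=
    (p.1 + (t*a) • e,
      (1/lam) • Matrix.mulVec A.transpose (A.mulVec (p.1 + (t*a) • e) - b)
        + (s + (t*c) • e)) with hq
  have hqmem : q ∈ gph T := by
    show q.2 ∈ T q.1
    rw [hT]
    refine ⟨s + (t*c) • e, ?_, rfl⟩
    rw [subdiff_iff]
    intro j
    show G1 ((p.1 + (t * a) • e) j) ((s + (t * c) • e) j)
    by_cases hj : j = i
    · subst hj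
      have e1 : (p.1 + (t*a) • e) j = p.1 j + t * a := by
        simp [Pi.add_apply, Pi.smul_apply, hei, smul_eq_mul]
      have e2 : (s + (t*c) • e) j = s j + t * c := by
        simp [Pi.add_apply, Pi.smul_apply, hei, smul_eq_mul]
      rw [e1, e2]
      exact hadm t htpos htt0
    · have hej : e j = 0 := by rw [he]; exact Pi.single_eq_of_ne hj 1
      have e1 : (p.1 + (t*a) • e) j = p.1 j := by
        simp [Pi.add_apply, Pi.smul_apply, hej, smul_eq_mul]
      have e2 : (s + (t*c) • e) j = s j := by
        simp [Pi.add_apply, Pi.smul_apply, hej, smul_eq_mul]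
      rw [e1, e2]
      exact (subdiff_iff p.1 s).mp hsmem j
  have hgq : (1/lam) • Matrix.mulVec A.transpose (A.mulVec (p.1 + (t*a) • e) - b)
      = (1/lam) • Matrix.mulVec A.transpose (A.mulVec p.1 - b) + (t*a) • Me := by
    rw [Matrix.mulVec_add, Matrix.mulVec_smul]
    have h1 : A.mulVec p.1 + (t*a) • A.mulVec e - b
        = (A.mulVec p.1 - b) + (t*a) • A.mulVec e := by abel
    rw [h1, Matrix.mulVec_add, Matrix.mulVec_smul, smul_add, hMe]
    rw [smul_comm]
  have hqsub : q - p = t • ξ := by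
    have h1 : (q - p).1 = (t • ξ).1 := by
      show q.1 - p.1 = t • ξ.1
      rw [hq, hξ]
      show p.1 + (t*a) • e - p.1 = t • (a • e)
      module
    have h2 : (q - p).2 = (t • ξ).2 := by
      show q.2 - p.2 = t • ξ.2
      rw [hq, hξ]
      show (1/lam) • Matrix.mulVec A.transpose (A.mulVec (p.1 + (t*a) • e) - b)
        + (s + (t*c) • e) - p.2 = t • (c • e + a • Me)
      rw [hgq, hs]
      module
    exact Prod.ext h1 h2
  have hpdot_smul : pdot (t • ξ) (t • ξ) = t^2 * pdot ξ ξ := by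
    show dotR (t • ξ.1) (t • ξ.1) + dotR (t • ξ.2) (t • ξ.2)
      = t^2 * (dotR ξ.1 ξ.1 + dotR ξ.2 ξ.2)
    simp only [dotR_smul_left, dotR_smul_right]
    ring
  have hpn : pnorm (q - p) = t * K := by
    rw [hqsub, hKdef]
    unfold pnorm
    rw [hpdot_smul, Real.sqrt_mul (sq_nonneg t), Real.sqrt_sq htpos.le]
  have hlt : pnorm (q - p) < δ := by
    rw [hpn]
    have h1 : t ≤ δ / (2 * K) := min_le_right _ _
    have h2 : t * K ≤ (δ / (2 * K)) * K := mul_le_mul_of_nonneg_right h1 hK.le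
    have h3 : (δ / (2 * K)) * K = δ / 2 := by field_simp
    linarith
  have happ := hδ q hqmem hlt
  have hpv : pdot v (q - p) = t * pdot v ξ := by
    rw [hqsub]
    show dotR v.1 (t • ξ.1) + dotR v.2 (t • ξ.2)
      = t * (dotR v.1 ξ.1 + dotR v.2 ξ.2)
    simp only [dotR_smul_right]
    ring
  rw [hpv, hpn] at happ
  have hre : ε * (t * K) = t * pdot v ξ / 2 := by
    rw [hε]; field_simp
  rw [hre] at happ
  nlinarith

lemma opt {m n : ℕ} (A : Matrix (Fin m) (Fin n) ℝ) (b : Fin m → ℝ) (lam : ℝ) (hlam : 0 < lam)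
    (xbar : Fin n → ℝ)
    (hmin : ∀ x : Fin n → ℝ,
      (1/(2*lam)) * (∑ j, (A.mulVec xbar j - b j)^2) + l1 xbar ≤
      (1/(2*lam)) * (∑ j, (A.mulVec x j - b j)^2) + l1 x) :
    (-((1/lam) • Matrix.mulVec A.transpose (A.mulVec xbar - b))) ∈ subdiffL1 xbar := by
  intro y
  set d : Fin n → ℝ := y - xbar with hd
  have hdot : dotR (-((1/lam) • Matrix.mulVec A.transpose (A.mulVec xbar - b))) d
      = -((1/lam) * ∑ j, (A.mulVec xbar j - b j) * A.mulVec d j) := by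
    rw [dotR_neg_left, dotR_smul_left, adjoint]
    simp only [Pi.sub_apply]
  set SRD : ℝ := ∑ j, (A.mulVec xbar j - b j) * A.mulVec d j with hSRD
  set SD2 : ℝ := ∑ j, (A.mulVec d j)^2 with hSD2
  have hSD2n : 0 ≤ SD2 := by
    rw [hSD2]; exact Finset.sum_nonneg fun j _ => sq_nonneg _
  have key : ∀ t : ℝ, 0 < t → t ≤ 1 →
      l1 xbar ≤ l1 y + (1/(2*lam)) * (2*SRD) + (1/(2*lam)) * t * SD2 := by
    intro t ht ht1
    have hmin' := hmin (xbar + t • d)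
    have hAx : ∀ j, A.mulVec (xbar + t • d) j - b j
        = (A.mulVec xbar j - b j) + t * A.mulVec d j := by
      intro j
      rw [Matrix.mulVec_add, Matrix.mulVec_smul]
      simp only [Pi.add_apply, Pi.smul_apply, smul_eq_mul]
      ring
    have hsum : ∑ j, (A.mulVec (xbar + t • d) j - b j)^2
        = (∑ j, (A.mulVec xbar j - b j)^2) + 2*t*SRD + t^2*SD2 := by
      have e1 : ∀ j, (A.mulVec (xbar + t • d) j - b j)^2
          = (A.mulVec xbar j - b j)^2 + 2*t*((A.mulVec xbar j - b j) * A.mulVec d j)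
            + t^2*(A.mulVec d j)^2 := fun j => by rw [hAx j]; ring
      rw [Finset.sum_congr rfl fun j _ => e1 j, Finset.sum_add_distrib, Finset.sum_add_distrib,
        ← Finset.mul_sum, ← Finset.mul_sum, hSRD, hSD2]
    have hl1c : l1 (xbar + t • d) ≤ (1-t) * l1 xbar + t * l1 y := by
      unfold l1
      have hpt : ∀ i, |(xbar + t • d) i| ≤ (1-t)*|xbar i| + t*|y i| := by
        intro i
        have hco : (xbar + t • d) i = (1-t) * xbar i + t * y i := by
          simp only [hd, Pi.add_apply, Pi.smul_apply, Pi.sub_apply, smul_eq_mul]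
          ring
        rw [hco]
        calc |(1-t)*xbar i + t*y i| ≤ |(1-t)*xbar i| + |t*y i| := abs_add_le _ _
          _ = (1-t)*|xbar i| + t*|y i| := by
            rw [abs_mul, abs_mul, abs_of_nonneg (by linarith : (0:ℝ) ≤ 1-t),
              abs_of_nonneg ht.le]
      calc (∑ i, |(xbar + t • d) i|) ≤ ∑ i, ((1-t)*|xbar i| + t*|y i|) :=
        Finset.sum_le_sum fun i _ => hpt i
        _ = (1-t)*(∑ i, |xbar i|) + t*(∑ i, |y i|) := by
          rw [Finset.sum_add_distrib, ← Finset.mul_sum, ← Finset.mul_sum]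
    rw [hsum] at hmin'
    have hstep : t * (l1 xbar - l1 y - (1/(2*lam))*(2*SRD) - (1/(2*lam))*t*SD2) ≤ 0 := by
      nlinarith [hmin', hl1c]
    nlinarith [hstep, ht]
  have hfin : l1 xbar ≤ l1 y + (1/(2*lam)) * (2*SRD) := by
    by_contra hcon
    push_neg at hcon
    set B : ℝ := (1/(2*lam)) * SD2 with hB
    have hBn : 0 ≤ B := by
      rw [hB]; exact mul_nonneg (by positivity) hSD2n
    set εv : ℝ := l1 xbar - l1 y - (1/(2*lam))*(2*SRD) with hεv
    have hεpos : 0 < εv := by rw [hεv]; linarith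
    set t : ℝ := min 1 (εv / (2*(B+1))) with htdef
    have htpos : 0 < t := lt_min one_pos (div_pos hεpos (by linarith))
    have ht1 : t ≤ 1 := min_le_left _ _
    have hk := key t htpos ht1
    have htle : t ≤ εv / (2*(B+1)) := min_le_right _ _
    have hne : (2*(B+1)) ≠ 0 := by positivity
    clear_value t εv B
    have h2B : t * (2*(B+1)) ≤ εv := by
      calc t * (2*(B+1)) ≤ εv / (2*(B+1)) * (2*(B+1)) :=
        mul_le_mul_of_nonneg_right htle (by linarith)
      _ = εv := div_mul_cancel₀ εv hne
    have htB : 0 ≤ t * B := mul_nonneg htpos.le hBn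
    have hkB : l1 xbar ≤ l1 y + (1/(2*lam))*(2*SRD) + t * B := by
      have hrw : (1/(2*lam)) * t * SD2 = t * B := by rw [hB]; ring
      linarith [hk]
    have h2B' : 2*(t*B) + 2*t ≤ εv := by nlinarith [h2B]
    linarith
  have h2c0 : (1/(2*lam)) * (2*SRD) = (1/lam) * SRD := by
    have : lam ≠ 0 := ne_of_gt hlam
    field_simp
  rw [hdot]
  linarith [hfin, h2c0]
end LassoAux

/-- The coderivative of `T(x) = (1/λ)Aᵀ(Ax − b) + ∂‖·‖₁(x)` at a LASSO solution `x̄`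
has trivial kernel when `A_J` has full column rank, `J` being the equicorrelation set. -/
theorem lasso_coderivative_trivial_kernel {m n : ℕ} (A : Matrix (Fin m) (Fin n) ℝ)
    (b : Fin m → ℝ) (lam : ℝ) (hlam : 0 < lam) (xbar : Fin n → ℝ)
    (hmin : ∀ x : Fin n → ℝ,
      (1/(2*lam)) * (∑ j, (A.mulVec xbar j - b j)^2) + l1 xbar ≤
      (1/(2*lam)) * (∑ j, (A.mulVec x j - b j)^2) + l1 x)
    (hrank : ∀ c : Fin n → ℝ,
      (∀ i, ¬ (|∑ j, A j i * (b j - A.mulVec xbar j)| = lam) → c i = 0) →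
      A.mulVec c = 0 → c = 0)
    (T : (Fin n → ℝ) → Set (Fin n → ℝ))
    (hT : ∀ x, T x = {u | ∃ v ∈ subdiffL1 x,
      u = (1/lam) • Matrix.mulVec A.transpose (A.mulVec x - b) + v})
    (w : Fin n → ℝ)
    (hw : ((0 : Fin n → ℝ), -w) ∈ limitingNormal (gph T) (xbar, 0)) :
    w = 0 := by
  classical
  obtain ⟨xs, vs, hxsmem, hvs, hxslim, hvslim⟩ := hw
  have hlaminv : (0:ℝ) < 1/lam := by positivity
  -- coordinatewise limits of the normals
  have hv2 : ∀ i, Tendsto (fun k => (vs k).2 i) atTop (nhds (-w i)) := by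
    intro i
    have hc : Continuous (fun p : (Fin n → ℝ) × (Fin n → ℝ) => p.2 i) :=
      (continuous_apply i).comp continuous_snd
    have := (hc.tendsto _).comp hvslim
    exact this
  -- G1 membership along the sequence
  have hskG : ∀ k j, LassoAux.G1 ((xs k).1 j)
      (((xs k).2 - (1/lam) • Matrix.mulVec A.transpose (A.mulVec (xs k).1 - b)) j) := by
    intro k j
    have hp' : (xs k).2 ∈ T (xs k).1 := hxsmem k
    rw [hT] at hp'
    obtain ⟨v0, hv0, hpe⟩ := hp'
    have hsv : (xs k).2 - (1/lam) • Matrix.mulVec A.transpose (A.mulVec (xs k).1 - b) = v0 := by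
      rw [hpe]; abel
    rw [hsv]
    exact (LassoAux.subdiff_iff _ _).mp hv0 j
  -- at interior coordinates the multiplier vanishes
  have hz : ∀ k i, (xs k).1 i = 0 →
      |((xs k).2 - (1/lam) • Matrix.mulVec A.transpose (A.mulVec (xs k).1 - b)) i| < 1 →
      (vs k).2 i = 0 := by
    intro k i hx hsab
    have ht0 : (0:ℝ) <
        1 - |((xs k).2 - (1/lam) • Matrix.mulVec A.transpose (A.mulVec (xs k).1 - b)) i| := by
      linarith
    have r1 := LassoAux.ray A b lam hlam T hT (xs k) (vs k) (hxsmem k) (hvs k) i 0 1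
      (Or.inr one_ne_zero) _ ht0 (fun t ht htle => by
        have hzz : (xs k).1 i + t * 0 = 0 := by rw [hx]; ring
        rw [hzz, mul_one]
        apply LassoAux.g1_zero
        calc |((xs k).2 - (1/lam) • Matrix.mulVec A.transpose (A.mulVec (xs k).1 - b)) i + t|
            ≤ |((xs k).2 - (1/lam) • Matrix.mulVec A.transpose (A.mulVec (xs k).1 - b)) i| + |t| :=
              abs_add_le _ _
          _ = |((xs k).2 - (1/lam) • Matrix.mulVec A.transpose (A.mulVec (xs k).1 - b)) i| + t := by
              rw [abs_of_pos ht]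
          _ ≤ 1 := by linarith)
    have r2 := LassoAux.ray A b lam hlam T hT (xs k) (vs k) (hxsmem k) (hvs k) i 0 (-1)
      (Or.inr (by norm_num)) _ ht0 (fun t ht htle => by
        have hzz : (xs k).1 i + t * 0 = 0 := by rw [hx]; ring
        rw [hzz]
        apply LassoAux.g1_zero
        calc |((xs k).2 - (1/lam) • Matrix.mulVec A.transpose (A.mulVec (xs k).1 - b)) i + t * (-1)|
            ≤ |((xs k).2 - (1/lam) • Matrix.mulVec A.transpose (A.mulVec (xs k).1 - b)) i| + |t * (-1)| :=
              abs_add_le _ _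
          _ = |((xs k).2 - (1/lam) • Matrix.mulVec A.transpose (A.mulVec (xs k).1 - b)) i| + t := by
              rw [abs_mul, abs_of_pos ht]; norm_num
          _ ≤ 1 := by linarith)
    linarith [r1, r2]
  -- the coordinatewise sign condition
  have hsign : ∀ k i, ((vs k).1 i
      + ((1/lam) • Matrix.mulVec A.transpose (A.mulVec (vs k).2)) i) * ((vs k).2 i) ≤ 0 := by
    intro k i
    have hG := hskG k i
    rcases lt_trichotomy ((xs k).1 i) 0 with hx | hx | hx
    · -- x < 0 : slope -1, ζ = 0
      have hs1 : ((xs k).2 - (1/lam) • Matrix.mulVec A.transpose (A.mulVec (xs k).1 - b)) i = -1 :=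
        LassoAux.g1_neg hx hG
      have r1 := LassoAux.ray A b lam hlam T hT (xs k) (vs k) (hxsmem k) (hvs k) i (-1) 0
        (Or.inl (by norm_num)) 1 one_pos (fun t ht htle => by
          rw [hs1]
          have h4 : (xs k).1 i + t * (-1) ≤ 0 := by nlinarith
          simpa using LassoAux.g1_negone h4)
      have r2 := LassoAux.ray A b lam hlam T hT (xs k) (vs k) (hxsmem k) (hvs k) i 1 0
        (Or.inl one_ne_zero) (-(xs k).1 i) (by linarith) (fun t ht htle => by
          rw [hs1]
          have h4 : (xs k).1 i + t * 1 ≤ 0 := by linarith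
          simpa using LassoAux.g1_negone h4)
      have hzeta : (vs k).1 i
          + ((1/lam) • Matrix.mulVec A.transpose (A.mulVec (vs k).2)) i = 0 := by
        linarith [r1, r2]
      rw [hzeta, zero_mul]
    · -- x = 0
      have habs := LassoAux.g1_abs_le hG
      rcases lt_or_eq_of_le habs with hlt | heq
      · rw [hz k i hx hlt, mul_zero]
      · rcases (abs_eq (by norm_num : (0:ℝ) ≤ 1)).mp heq with h1 | h1
        · -- s = 1 : ζ ≤ 0, σ ≥ 0
          have r1 := LassoAux.ray A b lam hlam T hT (xs k) (vs k) (hxsmem k) (hvs k) i 1 0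
            (Or.inl one_ne_zero) 1 one_pos (fun t ht htle => by
              rw [h1]
              have h4 : (0:ℝ) ≤ (xs k).1 i + t * 1 := by rw [hx]; linarith
              simpa using LassoAux.g1_one h4)
          have r2 := LassoAux.ray A b lam hlam T hT (xs k) (vs k) (hxsmem k) (hvs k) i 0 (-1)
            (Or.inr (by norm_num)) 1 one_pos (fun t ht htle => by
              rw [h1]
              have hzz : (xs k).1 i + t * 0 = 0 := by rw [hx]; ring
              rw [hzz]
              apply LassoAux.g1_zero
              rw [abs_le]
              constructor <;> nlinarith)
          have hzle : (vs k).1 i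
              + ((1/lam) • Matrix.mulVec A.transpose (A.mulVec (vs k).2)) i ≤ 0 := by
            linarith [r1]
          have hsge : 0 ≤ (vs k).2 i := by linarith [r2]
          nlinarith [hzle, hsge]
        · -- s = -1 : ζ ≥ 0, σ ≤ 0
          have r1 := LassoAux.ray A b lam hlam T hT (xs k) (vs k) (hxsmem k) (hvs k) i (-1) 0
            (Or.inl (by norm_num)) 1 one_pos (fun t ht htle => by
              rw [h1]
              have h4 : (xs k).1 i + t * (-1) ≤ 0 := by rw [hx]; nlinarith
              simpa using LassoAux.g1_negone h4)
          have r2 := LassoAux.ray A b lam hlam T hT (xs k) (vs k) (hxsmem k) (hvs k) i 0 1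
            (Or.inr one_ne_zero) 1 one_pos (fun t ht htle => by
              rw [h1]
              have hzz : (xs k).1 i + t * 0 = 0 := by rw [hx]; ring
              rw [hzz]
              apply LassoAux.g1_zero
              rw [abs_le]
              constructor <;> nlinarith)
          have hzge : 0 ≤ (vs k).1 i
              + ((1/lam) • Matrix.mulVec A.transpose (A.mulVec (vs k).2)) i := by
            linarith [r1]
          have hsle : (vs k).2 i ≤ 0 := by linarith [r2]
          nlinarith [hzge, hsle]
    · -- x > 0 : slope 1, ζ = 0
      have hs1 : ((xs k).2 - (1/lam) • Matrix.mulVec A.transpose (A.mulVec (xs k).1 - b)) i = 1 :=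
        LassoAux.g1_pos hx hG
      have r1 := LassoAux.ray A b lam hlam T hT (xs k) (vs k) (hxsmem k) (hvs k) i 1 0
        (Or.inl one_ne_zero) 1 one_pos (fun t ht htle => by
          rw [hs1]
          have h4 : (0:ℝ) ≤ (xs k).1 i + t * 1 := by nlinarith
          simpa using LassoAux.g1_one h4)
      have r2 := LassoAux.ray A b lam hlam T hT (xs k) (vs k) (hxsmem k) (hvs k) i (-1) 0
        (Or.inl (by norm_num)) ((xs k).1 i) hx (fun t ht htle => by
          rw [hs1]
          have h4 : (0:ℝ) ≤ (xs k).1 i + t * (-1) := by nlinarith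
          simpa using LassoAux.g1_one h4)
      have hzeta : (vs k).1 i
          + ((1/lam) • Matrix.mulVec A.transpose (A.mulVec (vs k).2)) i = 0 := by
        linarith [r1, r2]
      rw [hzeta, zero_mul]
  -- Fact 1 : A w = 0
  have hAw : A.mulVec w = 0 := by
    have hFk : ∀ k, (∑ i, (vs k).1 i * (vs k).2 i)
        + (1/lam) * (∑ j, (A.mulVec ((vs k).2) j)^2) ≤ 0 := by
      intro k
      have h1 : ∑ i, (((vs k).1 i
          + ((1/lam) • Matrix.mulVec A.transpose (A.mulVec (vs k).2)) i) * ((vs k).2 i)) ≤ 0 :=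
        Finset.sum_nonpos fun i _ => hsign k i
      have h2 : ∑ i, (((vs k).1 i
          + ((1/lam) • Matrix.mulVec A.transpose (A.mulVec (vs k).2)) i) * ((vs k).2 i))
          = (∑ i, (vs k).1 i * (vs k).2 i)
            + (1/lam) * (∑ j, (A.mulVec ((vs k).2) j)^2) := by
        have e1 : ∑ i, (((vs k).1 i
            + ((1/lam) • Matrix.mulVec A.transpose (A.mulVec (vs k).2)) i) * ((vs k).2 i))
            = (∑ i, (vs k).1 i * (vs k).2 i)
              + ∑ i, (((1/lam) • Matrix.mulVec A.transpose (A.mulVec (vs k).2)) i * (vs k).2 i) := by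
          rw [← Finset.sum_add_distrib]
          exact Finset.sum_congr rfl fun i _ => by ring
        have e2 : ∑ i, (((1/lam) • Matrix.mulVec A.transpose (A.mulVec (vs k).2)) i * (vs k).2 i)
            = (1/lam) * (∑ j, (A.mulVec ((vs k).2) j)^2) := by
          have e3 : ∑ i, (((1/lam) • Matrix.mulVec A.transpose (A.mulVec (vs k).2)) i * (vs k).2 i)
              = dotR ((1/lam) • Matrix.mulVec A.transpose (A.mulVec (vs k).2)) ((vs k).2) := rfl
          rw [e3, LassoAux.dotR_smul_left, LassoAux.adjoint]
          congr 1
          exact Finset.sum_congr rfl fun j _ => by rw [sq]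
        rw [e1, e2]
      rw [h2] at h1
      exact h1
    have hcont : Continuous (fun v : (Fin n → ℝ) × (Fin n → ℝ) =>
        (∑ i, v.1 i * v.2 i) + (1/lam) * (∑ j, (A.mulVec v.2 j)^2)) := by
      apply Continuous.add
      · exact continuous_finset_sum _ fun i _ =>
          ((continuous_apply i).comp continuous_fst).mul ((continuous_apply i).comp continuous_snd)
      · refine continuous_const.mul (continuous_finset_sum _ fun j _ => ?_)
        have hmv : Continuous (fun v : (Fin n → ℝ) × (Fin n → ℝ) => A.mulVec v.2 j) := by
          show Continuous (fun v : (Fin n → ℝ) × (Fin n → ℝ) => ∑ i, A j i * v.2 i)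
          exact continuous_finset_sum _ fun i _ =>
            continuous_const.mul ((continuous_apply i).comp continuous_snd)
        exact hmv.pow 2
    have hlim := (hcont.tendsto ((0 : Fin n → ℝ), -w)).comp hvslim
    have hle : (∑ i, (0 : Fin n → ℝ) i * (-w) i)
        + (1/lam) * (∑ j, (A.mulVec (-w) j)^2) ≤ 0 :=
      le_of_tendsto hlim (Filter.Eventually.of_forall fun k => hFk k)
    have e4 : (∑ i, (0 : Fin n → ℝ) i * (-w) i) = 0 := by simp
    have e5 : (∑ j, (A.mulVec (-w) j)^2) = ∑ j, (A.mulVec w j)^2 := by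
      refine Finset.sum_congr rfl fun j _ => ?_
      rw [Matrix.mulVec_neg, Pi.neg_apply, neg_sq]
    rw [e4, e5, zero_add] at hle
    have hSn : 0 ≤ ∑ j, (A.mulVec w j)^2 := Finset.sum_nonneg fun j _ => sq_nonneg _
    have hsq0 : ∑ j, (A.mulVec w j)^2 = 0 := by nlinarith [hle, hSn, hlaminv]
    funext j
    have h6 := (Finset.sum_eq_zero_iff_of_nonneg
      (fun j _ => sq_nonneg (A.mulVec w j))).mp hsq0 j (Finset.mem_univ j)
    have h7 := sq_eq_zero_iff.mp h6
    simpa using h7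
  -- Fact 2 : w vanishes off the equicorrelation set
  have hJ : ∀ i, ¬ (|∑ j, A j i * (b j - A.mulVec xbar j)| = lam) → w i = 0 := by
    intro i hi
    have hopt := LassoAux.opt A b lam hlam xbar hmin
    have hu1 : |(-((1/lam) • Matrix.mulVec A.transpose (A.mulVec xbar - b))) i| ≤ 1 :=
      LassoAux.g1_abs_le ((LassoAux.subdiff_iff _ _).mp hopt i)
    have hval : (-((1/lam) • Matrix.mulVec A.transpose (A.mulVec xbar - b))) i
        = (1/lam) * (∑ j, A j i * (b j - A.mulVec xbar j)) := by
      have e1 : Matrix.mulVec A.transpose (A.mulVec xbar - b) i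
          = ∑ j, A j i * (A.mulVec xbar j - b j) := by
        simp [Matrix.mulVec, dotProduct, Matrix.transpose_apply, Pi.sub_apply]
      have e2 : ∑ j, A j i * (b j - A.mulVec xbar j)
          = -∑ j, A j i * (A.mulVec xbar j - b j) := by
        rw [← Finset.sum_neg_distrib]
        exact Finset.sum_congr rfl fun j _ => by ring
      rw [Pi.neg_apply, Pi.smul_apply, e1, smul_eq_mul, e2]
      ring
    have habs2 : |(1/lam) * (∑ j, A j i * (b j - A.mulVec xbar j))| < 1 := by
      rw [hval] at hu1
      rcases lt_or_eq_of_le hu1 with h | h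
      · exact h
      · exfalso
        apply hi
        rw [abs_mul, abs_of_pos hlaminv] at h
        have hl0 : lam ≠ 0 := ne_of_gt hlam
        field_simp at h
        exact h
    have hcont2 : Continuous (fun p : (Fin n → ℝ) × (Fin n → ℝ) =>
        (p.2 - (1/lam) • Matrix.mulVec A.transpose (A.mulVec p.1 - b)) i) := by
      show Continuous (fun p : (Fin n → ℝ) × (Fin n → ℝ) =>
        p.2 i - (1/lam) * (∑ j, A.transpose i j * (A.mulVec p.1 j - b j)))
      refine ((continuous_apply i).comp continuous_snd).sub (continuous_const.mul ?_)
      refine continuous_finset_sum _ fun j _ =>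
        continuous_const.mul (Continuous.sub ?_ continuous_const)
      show Continuous fun p : (Fin n → ℝ) × (Fin n → ℝ) => ∑ i', A j i' * p.1 i'
      exact continuous_finset_sum _ fun i' _ =>
        continuous_const.mul ((continuous_apply i').comp continuous_fst)
    have hslim := (hcont2.tendsto (xbar, (0 : Fin n → ℝ))).comp hxslim
    have heval : (((xbar, (0 : Fin n → ℝ)) : (Fin n → ℝ) × (Fin n → ℝ)).2
        - (1/lam) • Matrix.mulVec A.transpose
            (A.mulVec ((xbar, (0 : Fin n → ℝ)) : (Fin n → ℝ) × (Fin n → ℝ)).1 - b)) i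
        = (1/lam) * (∑ j, A j i * (b j - A.mulVec xbar j)) := by
      rw [← hval]
      show ((0 : Fin n → ℝ) - (1/lam) • Matrix.mulVec A.transpose (A.mulVec xbar - b)) i
        = (-((1/lam) • Matrix.mulVec A.transpose (A.mulVec xbar - b))) i
      simp
    rw [heval] at hslim
    have habs3 := hslim.abs
    have hev := habs3.eventually_lt_const habs2
    have hev0 : ∀ᶠ k in atTop, (vs k).2 i = 0 := by
      refine hev.mono fun k hk => ?_
      rcases lt_trichotomy ((xs k).1 i) 0 with hx | hx | hx
      · have hq := LassoAux.g1_neg hx (hskG k i)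
        have hk' : |((xs k).2 - (1/lam) • Matrix.mulVec A.transpose (A.mulVec (xs k).1 - b)) i| < 1 := hk
        rw [hq] at hk'
        norm_num at hk'
      · exact hz k i hx hk
      · have hq := LassoAux.g1_pos hx (hskG k i)
        have hk' : |((xs k).2 - (1/lam) • Matrix.mulVec A.transpose (A.mulVec (xs k).1 - b)) i| < 1 := hk
        rw [hq] at hk'
        norm_num at hk'
    have h0 : Tendsto (fun k => (vs k).2 i) atTop (nhds 0) :=
      Tendsto.congr' (hev0.mono fun k hk => hk.symm) tendsto_const_nhds
    have hwi := tendsto_nhds_unique (hv2 i) h0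
    exact neg_eq_zero.mp hwi
  exact hrank w hJ hAw
end

section
/- Let A ∈ ℝ^{m×n}, b ∈ ℝ^m, λ > 0 and let x̄ minimize x ↦ (1/2)‖Ax − b‖² + λ‖x‖₁. Suppose the equicorrelation set J = {i : |A_i^T(b − Ax̄)| = λ} satisfies: A_J has full column rank. Then x̄ is the unique minimizer. -/
/-!
Two minimizers `x, y` have the same residual: by strict convexity of `u ↦ ‖u - b‖²` and convexity
of the ℓ1-norm, the midpoint would otherwise be strictly better. Hence they share the
correlations `Aᵢᵀ(b - Ax)`. Along the coordinate line `t ↦ y + t eᵢ` the objective is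
differentiable at `t = 0` whenever `yᵢ ≠ 0`, and its vanishing derivative gives
`Aᵢᵀ(b - Ay) = λ sign yᵢ`; so every minimizer is supported on the equicorrelation set `J`.
Then `y - x̄` is supported on `J` and lies in the kernel of `A`, so it vanishes.
-/

open Finset

open Matrix

namespace Lasso

variable {ι : Type*} [Fintype ι] {n : ℕ}

theorem l1_add_le (x y : Fin n → ℝ) : l1 (x + y) ≤ l1 x + l1 y := by
  unfold l1
  rw [← sum_add_distrib]
  exact sum_le_sum fun i _ => abs_add_le (x i) (y i)

theorem l1_smul (c : ℝ) (x : Fin n → ℝ) : l1 (c • x) = |c| * l1 x := by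
  simp only [l1, mul_sum, Pi.smul_apply, smul_eq_mul, abs_mul]

theorem hasDerivAt_l1_add_single {y : Fin n → ℝ} {i : Fin n} (hi : y i ≠ 0) :
    HasDerivAt (fun t : ℝ => l1 (y + Pi.single i t)) (SignType.sign (y i) : ℝ) 0 := by
  have hterm : ∀ k, HasDerivAt (fun t : ℝ => |(y + Pi.single i t : Fin n → ℝ) k|)
      ((Pi.single i (SignType.sign (y i) : ℝ) : Fin n → ℝ) k) 0 := by
    intro k
    rcases eq_or_ne k i with rfl | hk
    · simpa using (hasDerivAt_abs (x := y k + 0) (by simpa using hi)).comp_const_add (y k) 0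
    · simpa [hk] using hasDerivAt_const (0 : ℝ) |y k|
  simpa [l1] using HasDerivAt.fun_sum (u := univ) fun k _ => hterm k

noncomputable def objective (A : Matrix ι (Fin n) ℝ) (b : ι → ℝ) (lam : ℝ) (x : Fin n → ℝ) : ℝ :=
  (1/2) * (∑ j, ((A *ᵥ x) j - b j)^2) + lam * l1 x

theorem hasDerivAt_objective_add_single (A : Matrix ι (Fin n) ℝ) (b : ι → ℝ) (lam : ℝ)
    {y : Fin n → ℝ} {i : Fin n} (hi : y i ≠ 0) :
    HasDerivAt (fun t : ℝ => objective A b lam (y + Pi.single i t))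
      (∑ j, A j i * ((A *ᵥ y) j - b j) + lam * SignType.sign (y i)) 0 := by
  have hmv : ∀ (t : ℝ) j, (A *ᵥ (y + Pi.single i t)) j = (A *ᵥ y) j + A j i * t := by
    intro t j; simp [mulVec_add, mul_comm]
  have hsq : ∀ j, HasDerivAt (fun t : ℝ => ((A *ᵥ y) j + A j i * t - b j)^2)
      (2 * ((A *ᵥ y) j - b j) * A j i) 0 := by
    intro j
    simpa using ((((hasDerivAt_id (0:ℝ)).const_mul (A j i)).const_add ((A *ᵥ y) j)).sub_const
      (b j)).fun_pow 2
  have hquad : HasDerivAt (fun t : ℝ => (1/2) * ∑ j, ((A *ᵥ (y + Pi.single i t)) j - b j)^2)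
      (∑ j, A j i * ((A *ᵥ y) j - b j)) 0 := by
    simp only [hmv]
    refine ((HasDerivAt.fun_sum (u := univ) fun j _ => hsq j).const_mul (1/2 : ℝ)).congr_deriv ?_
    rw [mul_sum]
    exact sum_congr rfl fun j _ => by ring
  exact hquad.add ((hasDerivAt_l1_add_single hi).const_mul lam)

theorem abs_correlation_eq_of_forall_objective_le {A : Matrix ι (Fin n) ℝ} {b : ι → ℝ}
    {lam : ℝ} (hlam : 0 ≤ lam) {y : Fin n → ℝ}
    (hy : ∀ x, objective A b lam y ≤ objective A b lam x) {i : Fin n} (hi : y i ≠ 0) :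
    |∑ j, A j i * (b j - (A *ᵥ y) j)| = lam := by
  have hmin : IsLocalMin (fun t : ℝ => objective A b lam (y + Pi.single i t)) 0 := by
    refine Filter.Eventually.of_forall fun t => ?_
    dsimp only
    rw [Pi.single_zero, add_zero]
    exact hy _
  have hstat := hmin.hasDerivAt_eq_zero (hasDerivAt_objective_add_single A b lam hi)
  have hcorr : ∑ j, A j i * (b j - (A *ᵥ y) j) = lam * SignType.sign (y i) := by
    simp only [mul_sub, sum_sub_distrib] at hstat ⊢
    linarith
  rcases hi.lt_or_gt with hneg | hpos
  · simp [hcorr, sign_neg hneg, abs_of_nonneg hlam]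
  · simp [hcorr, sign_pos hpos, abs_of_nonneg hlam]

theorem sum_sq_midpoint_sub (u w b : ι → ℝ) :
    ∑ j, (2⁻¹ * (u j + w j) - b j)^2 =
      (∑ j, (u j - b j)^2 + ∑ j, (w j - b j)^2) / 2 - (∑ j, (u j - w j)^2) / 4 := by
  rw [← sum_add_distrib, sum_div, sum_div, ← sum_sub_distrib]
  exact sum_congr rfl fun j _ => by ring

theorem objective_midpoint_le (A : Matrix ι (Fin n) ℝ) (b : ι → ℝ) {lam : ℝ} (hlam : 0 ≤ lam)
    (x y : Fin n → ℝ) :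
    objective A b lam ((2⁻¹ : ℝ) • (x + y)) ≤
      (objective A b lam x + objective A b lam y) / 2 - (∑ j, ((A *ᵥ x) j - (A *ᵥ y) j)^2) / 8 := by
  have hquad := sum_sq_midpoint_sub (A *ᵥ x) (A *ᵥ y) b
  have hl1 : l1 ((2⁻¹ : ℝ) • (x + y)) ≤ (l1 x + l1 y) / 2 := by
    rw [l1_smul, abs_of_pos (by norm_num)]
    linarith [l1_add_le x y]
  simp only [objective, mulVec_smul, mulVec_add, Pi.smul_apply, Pi.add_apply, smul_eq_mul, hquad]
  linarith [mul_le_mul_of_nonneg_left hl1 hlam]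

theorem mulVec_eq_of_forall_objective_le {A : Matrix ι (Fin n) ℝ} {b : ι → ℝ} {lam : ℝ}
    (hlam : 0 ≤ lam) {x y : Fin n → ℝ} (hx : ∀ z, objective A b lam x ≤ objective A b lam z)
    (hy : ∀ z, objective A b lam y ≤ objective A b lam z) : A *ᵥ x = A *ᵥ y := by
  have hgap : ∑ j, ((A *ᵥ x) j - (A *ᵥ y) j)^2 ≤ 0 := by
    linarith [objective_midpoint_le A b hlam x y, hx ((2⁻¹ : ℝ) • (x + y)), hx y, hy x]
  have hzero := (sum_eq_zero_iff_of_nonneg fun j _ => sq_nonneg ((A *ᵥ x) j - (A *ᵥ y) j)).1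
    (hgap.antisymm (sum_nonneg fun j _ => sq_nonneg _))
  funext j
  exact sub_eq_zero.1 (pow_eq_zero_iff two_ne_zero |>.1 (hzero j (mem_univ j)))

theorem eq_zero_of_abs_correlation_ne {A : Matrix ι (Fin n) ℝ} {b : ι → ℝ} {lam : ℝ}
    (hlam : 0 ≤ lam) {x y : Fin n → ℝ} (hx : ∀ z, objective A b lam x ≤ objective A b lam z)
    (hy : ∀ z, objective A b lam y ≤ objective A b lam z) {i : Fin n}
    (hi : |∑ j, A j i * (b j - (A *ᵥ x) j)| ≠ lam) : y i = 0 := by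
  by_contra hyi
  refine hi ?_
  rw [← mulVec_eq_of_forall_objective_le hlam hy hx]
  exact abs_correlation_eq_of_forall_objective_le hlam hy hyi

end Lasso

/-- If the columns of A indexed by the equicorrelation set J are linearly independent,
then the LASSO minimizer is unique. -/
theorem lasso_unique_minimizer_of_equicorrelation_rank {m n : ℕ}
    (A : Matrix (Fin m) (Fin n) ℝ) (b : Fin m → ℝ) (lam : ℝ) (hlam : 0 < lam)
    (xbar : Fin n → ℝ)
    (hmin : ∀ x : Fin n → ℝ,
      (1/2) * (∑ j, (A.mulVec xbar j - b j)^2) + lam * l1 xbar ≤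
      (1/2) * (∑ j, (A.mulVec x j - b j)^2) + lam * l1 x)
    (hrank : ∀ c : Fin n → ℝ,
      (∀ i, ¬ (|∑ j, A j i * (b j - A.mulVec xbar j)| = lam) → c i = 0) →
      A.mulVec c = 0 → c = 0) :
    ∀ y : Fin n → ℝ,
      (∀ x : Fin n → ℝ,
        (1/2) * (∑ j, (A.mulVec y j - b j)^2) + lam * l1 y ≤
        (1/2) * (∑ j, (A.mulVec x j - b j)^2) + lam * l1 x) →
      y = xbar := by
  intro y hy
  have hsupp : ∀ i, |∑ j, A j i * (b j - (A *ᵥ xbar) j)| ≠ lam → y i - xbar i = 0 := fun i hi => by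
    rw [Lasso.eq_zero_of_abs_correlation_ne hlam.le hmin hy hi,
      Lasso.eq_zero_of_abs_correlation_ne hlam.le hmin hmin hi, sub_self]
  have hAy : A *ᵥ y = A *ᵥ xbar := Lasso.mulVec_eq_of_forall_objective_le hlam.le hy hmin
  exact sub_eq_zero.1 (hrank (y - xbar) hsupp (by rw [mulVec_sub, hAy, sub_self]))
end
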